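/- arXiv:2505.03098 — 10 statements merged into one kernel-verified Lean document; each statement's English description precedes it below -/
import Mathlib

section
/- Let K ≥ 1, let a_1,…,a_K, ω_1,…,ω_K, φ_1,…,φ_K be real numbers, let g(t) = Σ_{k=1}^K a_k sin(ω_k t + φ_k), and let Ω = max_k |ω_k| with Ω > 0. Define the finite-difference operator on sequences by (Δh)(n) = h(n+1) − h(n), and let g_T(n) = g(nT). If L ≥ 1 is an integer and 0 < T ≤ π/Ω, then for every n ∈ ℤ, |(Δ^L g_T)(n)| ≤ 2^L sin^L(ΩT/2) · Σ_{k=1}^K |a_k|. -/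
/-- First-order finite-difference operator on sequences `ℤ → ℝ`. -/
def fdiff (h : ℤ → ℝ) : ℤ → ℝ := fun n => h (n + 1) - h n

lemma fdiff_iter_smul (c : ℝ) (f : ℤ → ℝ) (L : ℕ) :
    fdiff^[L] (fun n => c * f n) = fun n => c * fdiff^[L] f n := by
  induction L generalizing f with
  | zero => simp
  | succ L ih =>
      rw [Function.iterate_succ_apply, Function.iterate_succ_apply]
      have : fdiff (fun n => c * f n) = fun n => c * fdiff f n := by
        funext n; simp [fdiff]; ring
      rw [this, ih (fdiff f)]

lemma fdiff_sin (θ ψ : ℝ) :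
    fdiff (fun n : ℤ => Real.sin (θ * n + ψ)) =
      fun n : ℤ => 2 * Real.sin (θ / 2) *
        Real.sin (θ * n + (ψ + θ / 2 + Real.pi / 2)) := by
  funext n
  have h := Real.sin_sub_sin (θ * ((n : ℝ) + 1) + ψ) (θ * n + ψ)
  simp only [fdiff]
  push_cast
  rw [h]
  have h1 : (θ * ((n : ℝ) + 1) + ψ - (θ * n + ψ)) / 2 = θ / 2 := by ring
  have h2 : (θ * ((n : ℝ) + 1) + ψ + (θ * n + ψ)) / 2 = θ * n + (ψ + θ / 2) := by ring
  rw [h1, h2, ← Real.sin_add_pi_div_two]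
  ring_nf

lemma fdiff_iter_sin (θ ψ : ℝ) (L : ℕ) :
    ∃ ψ', fdiff^[L] (fun n : ℤ => Real.sin (θ * n + ψ)) =
      fun n : ℤ => (2 * Real.sin (θ / 2)) ^ L * Real.sin (θ * n + ψ') := by
  induction L generalizing ψ with
  | zero => exact ⟨ψ, by simp⟩
  | succ L ih =>
      obtain ⟨ψ', hψ'⟩ := ih (ψ + θ / 2 + Real.pi / 2)
      refine ⟨ψ', ?_⟩
      rw [Function.iterate_succ_apply, fdiff_sin, fdiff_iter_smul, hψ']
      funext n; ring

lemma fdiff_iter_sum (K : ℕ) (f : Fin K → ℤ → ℝ) (L : ℕ) :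
    fdiff^[L] (fun n => ∑ k, f k n) = fun n => ∑ k, fdiff^[L] (f k) n := by
  induction L generalizing f with
  | zero => simp
  | succ L ih =>
      rw [Function.iterate_succ_apply]
      have : fdiff (fun n => ∑ k, f k n) = fun n => ∑ k, fdiff (f k) n := by
        funext n; simp [fdiff, Finset.sum_sub_distrib]
      rw [this, ih (fun k => fdiff (f k))]
      simp only [Function.iterate_succ_apply]

lemma abs_sin_le_sin {x y : ℝ} (h : |x| ≤ y) (hy : y ≤ Real.pi / 2) :
    |Real.sin x| ≤ Real.sin y := by
  have hpi := Real.pi_pos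
  have hax : |x| ≤ Real.pi := by linarith
  have h1 : |Real.sin x| = Real.sin |x| := by
    rcases abs_cases x with ⟨hx, hx'⟩ | ⟨hx, hx'⟩
    · rw [hx, abs_of_nonneg (Real.sin_nonneg_of_nonneg_of_le_pi hx' (by rw [← hx]; exact hax))]
    · rw [hx, Real.sin_neg, abs_of_nonpos
        (Real.sin_nonpos_of_nonpos_of_neg_pi_le hx'.le (by linarith [neg_abs_le x]))]
  rw [h1]
  exact Real.sin_le_sin_of_le_of_le_pi_div_two (by linarith [abs_nonneg x]) hy h

theorem sos_iterated_difference_bound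
    (K : ℕ) (hK : 1 ≤ K) (a ω φ : Fin K → ℝ)
    (g : ℝ → ℝ)
    (hg : ∀ t : ℝ, g t = ∑ k, a k * Real.sin (ω k * t + φ k))
    (Ω : ℝ)
    (hΩ : Ω = Finset.univ.sup'
      (⟨⟨0, hK⟩, Finset.mem_univ _⟩ : (Finset.univ : Finset (Fin K)).Nonempty)
      (fun k => |ω k|))
    (hΩpos : 0 < Ω)
    (T : ℝ) (hT : 0 < T) (hTle : T ≤ Real.pi / Ω)
    (gT : ℤ → ℝ) (hgT : ∀ n : ℤ, gT n = g (n * T))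
    (L : ℕ) (hL : 1 ≤ L) :
    ∀ n : ℤ, |(fdiff^[L] gT) n| ≤
      2 ^ L * Real.sin (Ω * T / 2) ^ L * ∑ k, |a k| := by
  intro n
  have hgT' : gT = fun n : ℤ => ∑ k, a k * Real.sin ((ω k * T) * n + φ k) := by
    funext m
    rw [hgT, hg]
    congr 1; funext k; ring_nf
  have hΩT : Ω * T / 2 ≤ Real.pi / 2 := by
    have : Ω * T ≤ Real.pi := by
      calc Ω * T ≤ Ω * (Real.pi / Ω) := mul_le_mul_of_nonneg_left hTle hΩpos.le
        _ = Real.pi := by field_simp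
    linarith
  have hΩT0 : 0 ≤ Ω * T / 2 := by positivity
  have hsinΩ : 0 ≤ Real.sin (Ω * T / 2) :=
    Real.sin_nonneg_of_nonneg_of_le_pi hΩT0 (by linarith [Real.pi_pos])
  have key : ∀ k : Fin K,
      |(2 * Real.sin (ω k * T / 2)) ^ L| ≤ (2 * Real.sin (Ω * T / 2)) ^ L := by
    intro k
    have hωΩ : |ω k| ≤ Ω := by
      rw [hΩ]; exact Finset.le_sup' (fun k => |ω k|) (Finset.mem_univ k)
    have habs : |ω k * T / 2| ≤ Ω * T / 2 := by
      rw [abs_div, abs_mul, abs_of_pos hT]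
      have h2 : |ω k| * T ≤ Ω * T := mul_le_mul_of_nonneg_right hωΩ hT.le
      rw [abs_of_pos (by norm_num : (0:ℝ) < 2)]
      linarith
    have h1 : |Real.sin (ω k * T / 2)| ≤ Real.sin (Ω * T / 2) :=
      abs_sin_le_sin habs hΩT
    rw [abs_pow]
    apply pow_le_pow_left₀ (abs_nonneg _)
    rw [abs_mul, abs_of_pos (by norm_num : (0:ℝ) < 2)]
    linarith
  -- decompose iterated difference
  rw [hgT', fdiff_iter_sum]
  have hterm : ∀ k : Fin K,
      |fdiff^[L] (fun m : ℤ => a k * Real.sin ((ω k * T) * m + φ k)) n| ≤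
        |a k| * (2 * Real.sin (Ω * T / 2)) ^ L := by
    intro k
    obtain ⟨ψ', hψ'⟩ := fdiff_iter_sin (ω k * T) (φ k) L
    rw [fdiff_iter_smul, hψ']
    simp only [abs_mul]
    have hθ : (ω k * T) / 2 = ω k * T / 2 := by ring
    calc |a k| * (|(2 * Real.sin (ω k * T / 2)) ^ L| * |Real.sin ((ω k * T) * n + ψ')|)
        ≤ |a k| * ((2 * Real.sin (Ω * T / 2)) ^ L * 1) := by
          apply mul_le_mul_of_nonneg_left _ (abs_nonneg _)
          exact mul_le_mul (key k) (Real.abs_sin_le_one _)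
            (abs_nonneg _) (by positivity)
      _ = |a k| * (2 * Real.sin (Ω * T / 2)) ^ L := by ring
  calc |∑ k, fdiff^[L] (fun m : ℤ => a k * Real.sin ((ω k * T) * m + φ k)) n|
      ≤ ∑ k, |fdiff^[L] (fun m : ℤ => a k * Real.sin ((ω k * T) * m + φ k)) n| :=
        Finset.abs_sum_le_sum_abs _ _
    _ ≤ ∑ k, |a k| * (2 * Real.sin (Ω * T / 2)) ^ L :=
        Finset.sum_le_sum fun k _ => hterm k
    _ = 2 ^ L * Real.sin (Ω * T / 2) ^ L * ∑ k, |a k| := by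
        rw [← Finset.sum_mul, mul_pow]; ring
end

section
/- Let K ≥ 1, let a_1,…,a_K, ω_1,…,ω_K, φ_1,…,φ_K be real numbers, let g(t) = Σ_{k=1}^K a_k sin(ω_k t + φ_k), let Ω = max_k |ω_k| with Ω > 0, and let ‖a‖₁ = Σ_{k=1}^K |a_k| > 0. Let L ≥ 1 be an integer and κ > 0 a constant with (1/2)(κ/‖a‖₁)^{1/L} ≤ 1. If 0 < T ≤ (2/Ω)·arcsin((1/2)(κ/‖a‖₁)^{1/L}), then for every n ∈ ℤ, |(Δ^L g_T)(n)| ≤ κ, where g_T(n) = g(nT) and Δ is the finite-difference operator (Δh)(n) = h(n+1) − h(n). -/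
theorem sos_iterated_difference_kappa_bound
    (K : ℕ) (hK : 1 ≤ K) (a ω φ : Fin K → ℝ)
    (g : ℝ → ℝ)
    (hg : ∀ t : ℝ, g t = ∑ k, a k * Real.sin (ω k * t + φ k))
    (Ω : ℝ)
    (hΩ : Ω = Finset.univ.sup'
      (⟨⟨0, hK⟩, Finset.mem_univ _⟩ : (Finset.univ : Finset (Fin K)).Nonempty)
      (fun k => |ω k|))
    (hΩpos : 0 < Ω)
    (A : ℝ) (hA : A = ∑ k, |a k|) (hApos : 0 < A)
    (L : ℕ) (hL : 1 ≤ L) (κ : ℝ) (hκ : 0 < κ)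
    (harg : (1 / 2) * (κ / A) ^ ((1 : ℝ) / L) ≤ 1)
    (T : ℝ) (hT : 0 < T)
    (hTle : T ≤ (2 / Ω) * Real.arcsin ((1 / 2) * (κ / A) ^ ((1 : ℝ) / L)))
    (gT : ℤ → ℝ) (hgT : ∀ n : ℤ, gT n = g (n * T)) :
    ∀ n : ℤ, |(fdiff^[L] gT) n| ≤ κ := by
  -- closed form for the iterated difference
  have key : ∀ M : ℕ, ∃ ψ : Fin K → ℝ, ∀ n : ℤ,
      (fdiff^[M] gT) n
        = ∑ k, a k * (2 * Real.sin (ω k * T / 2)) ^ M *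
            Real.sin (ω k * ((n : ℝ) * T) + ψ k) := by
    intro M
    induction M with
    | zero =>
      refine ⟨φ, fun n => ?_⟩
      simp [hgT, hg]
    | succ M ih =>
      obtain ⟨ψ, hψ⟩ := ih
      refine ⟨fun k => ψ k + ω k * T / 2 + Real.pi / 2, fun n => ?_⟩
      rw [Function.iterate_succ_apply']
      show (fdiff^[M] gT) (n + 1) - (fdiff^[M] gT) n = _
      rw [hψ, hψ, ← Finset.sum_sub_distrib]
      apply Finset.sum_congr rfl
      intro k _
      have hc : ((n + 1 : ℤ) : ℝ) = (n : ℝ) + 1 := by push_cast; ring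
      rw [hc, ← mul_sub, Real.sin_sub_sin]
      have e1 : (ω k * (((n : ℝ) + 1) * T) + ψ k - (ω k * ((n : ℝ) * T) + ψ k)) / 2
          = ω k * T / 2 := by ring
      have e2 : (ω k * (((n : ℝ) + 1) * T) + ψ k + (ω k * ((n : ℝ) * T) + ψ k)) / 2
          = ω k * ((n : ℝ) * T) + ψ k + ω k * T / 2 := by ring
      rw [e1, e2]
      have e3 : ω k * ((n : ℝ) * T) + (ψ k + ω k * T / 2 + Real.pi / 2)
          = (ω k * ((n : ℝ) * T) + ψ k + ω k * T / 2) + Real.pi / 2 := by ring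
      rw [e3, Real.sin_add_pi_div_two]
      ring
  obtain ⟨ψ, hψ⟩ := key L
  intro n
  rw [hψ]
  set s : ℝ := (1 / 2) * (κ / A) ^ ((1 : ℝ) / L) with hs
  have hκA : (0 : ℝ) < κ / A := div_pos hκ hApos
  have hspos : 0 < s := by positivity
  have hs1 : s ≤ 1 := harg
  -- each |2 sin(ω k T / 2)| ≤ 2 s
  have hbnd : ∀ k : Fin K, |2 * Real.sin (ω k * T / 2)| ≤ 2 * s := by
    intro k
    have hωk : |ω k| ≤ Ω := by
      rw [hΩ]; exact Finset.le_sup' (fun k => |ω k|) (Finset.mem_univ k)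
    have harcs : Ω * T / 2 ≤ Real.arcsin s := by
      have := hTle
      rw [div_mul_eq_mul_div, le_div_iff₀ hΩpos] at this
      linarith [this]
    have harc_le : Real.arcsin s ≤ Real.pi / 2 := Real.arcsin_le_pi_div_two s
    have hx : |ω k * T / 2| ≤ Real.arcsin s := by
      have : |ω k * T / 2| = |ω k| * T / 2 := by
        rw [abs_div, abs_mul, abs_of_pos hT]
        simp [abs_of_pos, show |(2:ℝ)| = 2 by norm_num]
      rw [this]
      have : |ω k| * T / 2 ≤ Ω * T / 2 := by
        have := mul_le_mul_of_nonneg_right hωk (le_of_lt hT)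
        linarith
      linarith
    have hsin : |Real.sin (ω k * T / 2)| ≤ s := by
      have hpi : |ω k * T / 2| ≤ Real.pi := by
        calc |ω k * T / 2| ≤ Real.pi / 2 := le_trans hx harc_le
          _ ≤ Real.pi := by linarith [Real.pi_pos]
      have h1 : |Real.sin (ω k * T / 2)| = Real.sin |ω k * T / 2| := by
        rcases le_or_gt 0 (ω k * T / 2) with h | h
        · rw [abs_of_nonneg h, abs_of_nonneg]
          apply Real.sin_nonneg_of_mem_Icc
          refine ⟨h, ?_⟩
          rw [abs_of_nonneg h] at hpi; exact hpi
        · rw [abs_of_neg h, Real.sin_neg, abs_of_nonpos]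
          apply Real.sin_nonpos_of_nonpos_of_neg_pi_le (le_of_lt h)
          rw [abs_of_neg h] at hpi; linarith
      rw [h1]
      have hmono : Real.sin |ω k * T / 2| ≤ Real.sin (Real.arcsin s) := by
        apply Real.strictMonoOn_sin.monotoneOn
        · constructor
          · linarith [abs_nonneg (ω k * T / 2), Real.pi_pos]
          · exact le_trans hx harc_le
        · constructor
          · linarith [Real.arcsin_nonneg.mpr (le_of_lt hspos), Real.pi_pos]
          · exact harc_le
        · exact hx
      rw [Real.sin_arcsin (by linarith) hs1] at hmono
      exact hmono
    calc |2 * Real.sin (ω k * T / 2)| = 2 * |Real.sin (ω k * T / 2)| := by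
          rw [abs_mul]; norm_num
      _ ≤ 2 * s := by linarith
  -- (2 s)^L = κ / A
  have hpow : (2 * s) ^ L = κ / A := by
    have h2s : 2 * s = (κ / A) ^ ((1 : ℝ) / L) := by rw [hs]; ring
    rw [h2s, ← Real.rpow_natCast ((κ / A) ^ ((1 : ℝ) / L)) L,
      ← Real.rpow_mul (le_of_lt hκA)]
    have hLne : (L : ℝ) ≠ 0 := Nat.cast_ne_zero.mpr (Nat.one_le_iff_ne_zero.mp hL)
    rw [one_div, inv_mul_cancel₀ hLne, Real.rpow_one]
  calc |∑ k, a k * (2 * Real.sin (ω k * T / 2)) ^ L *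
          Real.sin (ω k * ((n : ℝ) * T) + ψ k)|
      ≤ ∑ k, |a k * (2 * Real.sin (ω k * T / 2)) ^ L *
          Real.sin (ω k * ((n : ℝ) * T) + ψ k)| := Finset.abs_sum_le_sum_abs _ _
    _ ≤ ∑ k, |a k| * (κ / A) := by
        apply Finset.sum_le_sum
        intro k _
        rw [abs_mul, abs_mul]
        have h1 : |(2 * Real.sin (ω k * T / 2)) ^ L| ≤ (2 * s) ^ L := by
          rw [abs_pow]
          exact pow_le_pow_left₀ (abs_nonneg _) (hbnd k) L
        have h2 : |Real.sin (ω k * ((n : ℝ) * T) + ψ k)| ≤ 1 := Real.abs_sin_le_one _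
        calc |a k| * |(2 * Real.sin (ω k * T / 2)) ^ L| *
              |Real.sin (ω k * ((n : ℝ) * T) + ψ k)|
            ≤ |a k| * (2 * s) ^ L * 1 := by
              apply mul_le_mul (mul_le_mul_of_nonneg_left h1 (abs_nonneg _)) h2
                (abs_nonneg _)
              positivity
          _ = |a k| * (κ / A) := by rw [mul_one, hpow]
    _ = A * (κ / A) := by rw [← Finset.sum_mul, ← hA]
    _ = κ := by field_simp
end

section
/- Let λ > 0 and define the modulo map ℳ_λ(x) = 2λ(fract((x+λ)/(2λ)) − 1/2), where fract(y) = y − ⌊y⌋. Let h : ℤ → ℝ be a sequence and B ≥ 0 a constant such that |h(n+1) − h(n)| ≤ B for all n ∈ ℤ. Define the residue sequence ε_h(n) = h(n) − ℳ_λ(h(n)). Then for every n ∈ ℤ, |ε_h(n+1) − ε_h(n)| ≤ 2λ·⌈B/(2λ)⌉. -/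
/-- The modulo (folding) map `ℳ_λ(x) = 2λ(fract((x+λ)/(2λ)) − 1/2)`. -/
noncomputable def modMap (lam x : ℝ) : ℝ :=
  2 * lam * (Int.fract ((x + lam) / (2 * lam)) - 1 / 2)

lemma floor_diff_le {a b c : ℝ} (hab : |a - b| ≤ c) :
    |(⌊a⌋ : ℤ) - ⌊b⌋| ≤ ⌈c⌉ := by
  rw [abs_sub_le_iff] at hab ⊢
  constructor
  · have : a ≤ b + c := by linarith [hab.1]
    have h1 : (⌊a⌋ : ℝ) < ⌊b⌋ + 1 + ⌈c⌉ := by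
      calc (⌊a⌋ : ℝ) ≤ a := Int.floor_le a
        _ ≤ b + c := this
        _ < ⌊b⌋ + 1 + ⌈c⌉ := by
          have := Int.lt_floor_add_one b
          have := Int.le_ceil c
          linarith
    have : ⌊a⌋ < ⌊b⌋ + 1 + ⌈c⌉ := by exact_mod_cast h1
    omega
  · have : b ≤ a + c := by linarith [hab.2]
    have h1 : (⌊b⌋ : ℝ) < ⌊a⌋ + 1 + ⌈c⌉ := by
      calc (⌊b⌋ : ℝ) ≤ b := Int.floor_le b
        _ ≤ a + c := this
        _ < ⌊a⌋ + 1 + ⌈c⌉ := by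
          have := Int.lt_floor_add_one a
          have := Int.le_ceil c
          linarith
    have : ⌊b⌋ < ⌊a⌋ + 1 + ⌈c⌉ := by exact_mod_cast h1
    omega

theorem residue_difference_bound
    (lam : ℝ) (hlam : 0 < lam)
    (h : ℤ → ℝ) (B : ℝ) (hB : 0 ≤ B)
    (hdiff : ∀ n : ℤ, |h (n + 1) - h n| ≤ B)
    (ε : ℤ → ℝ) (hε : ∀ n : ℤ, ε n = h n - modMap lam (h n)) :
    ∀ n : ℤ, |ε (n + 1) - ε n| ≤ 2 * lam * ⌈B / (2 * lam)⌉ := by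
  intro n
  have h2 : (0:ℝ) < 2 * lam := by linarith
  have key : ∀ m : ℤ, ε m = 2 * lam * ⌊(h m + lam) / (2 * lam)⌋ := by
    intro m
    rw [hε m, modMap, Int.fract]
    field_simp
    ring
  rw [key (n+1), key n, ← mul_sub, abs_mul, abs_of_pos h2]
  have hfd : |(⌊(h (n+1) + lam) / (2 * lam)⌋ : ℤ) - ⌊(h n + lam) / (2 * lam)⌋|
      ≤ ⌈B / (2 * lam)⌉ := by
    apply floor_diff_le
    rw [div_sub_div_same, abs_div, abs_of_pos h2, div_le_div_iff₀ h2 h2]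
    have : h (n+1) + lam - (h n + lam) = h (n+1) - h n := by ring
    rw [this]
    have := hdiff n
    nlinarith [abs_nonneg (h (n+1) - h n)]
  have hcast : |((⌊(h (n+1) + lam) / (2 * lam)⌋ : ℝ)) - ⌊(h n + lam) / (2 * lam)⌋|
      ≤ (⌈B / (2 * lam)⌉ : ℝ) := by exact_mod_cast hfd
  calc 2 * lam * |((⌊(h (n+1) + lam) / (2 * lam)⌋:ℝ)) - ⌊(h n + lam) / (2 * lam)⌋|
      ≤ 2 * lam * ⌈B / (2 * lam)⌉ := by
        exact mul_le_mul_of_nonneg_left hcast (le_of_lt h2)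
end

section
/- Let a₁ ∈ ℝ with a₁ ≠ 0, T > 0, and ω₁, φ₁ ∈ ℝ with sin(ω₁T) ≠ 0; set θ_n = ω₁Tn + φ₁. Then lim_{N→∞} (1/N³) Σ_{n=1}^{N−1} (a₁T((n+1)cos θ_{n+1} − n cos θ_n))² = a₁²T²(1 − cos(ω₁T))/3. -/
open Filter Finset Real Topology

/-! With c = ω₁T and θ_n = cn + φ₁, the bracket is n (cos θ_{n+1} - cos θ_n) + cos θ_{n+1}, whose
square is n² (1 - cos c)(1 - cos (2θ_n + c)) up to O(n). The non-oscillating part sums to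
(1 - cos c) N³/3 + O(N²). Since sin c ≠ 0, the partial sums of cos (2cn + ψ) are bounded (they
telescope after multiplication by 2 sin c), so Abel summation makes the oscillating part
Σ n² cos (2θ_n + c) only O(N²). -/

theorem Finset.sum_Icc_one_sub_one_eq_sum_range {M : Type*} [AddCommMonoid M] {f : ℕ → M}
    (hf : f 0 = 0) (N : ℕ) : ∑ n ∈ Icc 1 (N - 1), f n = ∑ n ∈ range N, f n := by
  rcases N.eq_zero_or_pos with rfl | hN
  · simp
  · rw [sum_range_eq_add_Ico f hN, hf, zero_add]
    rfl -- `Icc 1 (N - 1)` and `Ico 1 N` are definitionally equal on `ℕ`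

theorem Finset.norm_sum_range_smul_le_of_monotone {E : Type*} [SeminormedAddCommGroup E]
    [NormedSpace ℝ E] {w : ℕ → ℝ} (hw : Monotone w) (hw₀ : 0 ≤ w 0) {a : ℕ → E} {B : ℝ}
    (hB : ∀ n, ‖∑ i ∈ range n, a i‖ ≤ B) (N : ℕ) :
    ‖∑ i ∈ range N, w i • a i‖ ≤ 2 * B * w (N - 1) := by
  have hwN : 0 ≤ w (N - 1) := hw₀.trans (hw (Nat.zero_le _))
  have hincr : ∀ i, 0 ≤ w (i + 1) - w i := fun i => sub_nonneg.2 (hw i.le_succ)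
  rw [sum_range_by_parts]
  calc ‖w (N - 1) • ∑ i ∈ range N, a i
          - ∑ i ∈ range (N - 1), (w (i + 1) - w i) • ∑ j ∈ range (i + 1), a j‖
      ≤ w (N - 1) * B + ∑ i ∈ range (N - 1), (w (i + 1) - w i) * B := by
        refine (norm_sub_le _ _).trans (add_le_add ?_ ((norm_sum_le _ _).trans ?_))
        · rw [norm_smul, Real.norm_of_nonneg hwN]
          exact mul_le_mul_of_nonneg_left (hB N) hwN
        · refine sum_le_sum fun i _ => ?_
          rw [norm_smul, Real.norm_of_nonneg (hincr i)]
          exact mul_le_mul_of_nonneg_left (hB _) (hincr i)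
    _ = (2 * w (N - 1) - w 0) * B := by
        rw [← sum_mul, sum_range_sub]
        ring
    _ ≤ 2 * B * w (N - 1) := by
        nlinarith [(norm_nonneg _).trans (hB 0)]

theorem Real.cos_add_sub_cos_sq (θ c : ℝ) :
    (cos (θ + c) - cos θ) ^ 2 = (1 - cos c) * (1 - cos (2 * θ + c)) := by
  rw [cos_add, cos_add, cos_two_mul, sin_two_mul]
  linear_combination sin c ^ 2 * sin_sq_add_cos_sq θ - (cos θ ^ 2 - 1) * sin_sq_add_cos_sq c

theorem Real.two_mul_sin_mul_sum_range_cos (c ψ : ℝ) (N : ℕ) :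
    2 * sin c * ∑ n ∈ range N, cos (2 * c * n + ψ) = sin (2 * c * N + ψ - c) - sin (ψ - c) := by
  have h : ∀ n : ℕ, 2 * sin c * cos (2 * c * n + ψ)
      = sin (2 * c * (n + 1 : ℕ) + ψ - c) - sin (2 * c * n + ψ - c) := by
    intro n
    rw [sin_sub_sin]
    push_cast
    ring_nf
  rw [mul_sum, sum_congr rfl fun n _ => h n, sum_range_sub (fun n : ℕ => sin (2 * c * n + ψ - c))]
  simp

theorem Real.abs_sum_range_cos_le {c : ℝ} (hc : sin c ≠ 0) (ψ : ℝ) (N : ℕ) :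
    |∑ n ∈ range N, cos (2 * c * n + ψ)| ≤ 1 / |sin c| := by
  have h := two_mul_sin_mul_sum_range_cos c ψ N
  have hpos : 0 < |sin c| := abs_pos.2 hc
  rw [le_div_iff₀ hpos]
  have hbound : |2 * sin c * ∑ n ∈ range N, cos (2 * c * n + ψ)| ≤ 2 := by
    rw [h]
    exact (abs_sub _ _).trans
      (by linarith [abs_sin_le_one (2 * c * N + ψ - c), abs_sin_le_one (ψ - c)])
  rw [abs_mul, abs_mul, abs_two] at hbound
  linarith

theorem Real.abs_sum_range_sq_mul_cos_le {c : ℝ} (hc : sin c ≠ 0) (ψ : ℝ) (N : ℕ) :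
    |∑ n ∈ range N, (n : ℝ) ^ 2 * cos (2 * c * n + ψ)| ≤ 2 / |sin c| * N ^ 2 := by
  have h := norm_sum_range_smul_le_of_monotone (w := fun n : ℕ => (n : ℝ) ^ 2)
    (fun m n hmn => by simp only; gcongr) (by simp)
    (fun n => (norm_eq_abs _).trans_le (abs_sum_range_cos_le hc ψ n)) N
  simp only [smul_eq_mul, Real.norm_eq_abs] at h
  refine h.trans ?_
  rw [mul_div_assoc', mul_one]
  gcongr
  exact Nat.sub_le N 1

theorem abs_sq_sub_one_sub_cos_mul_sq_le (c φ x : ℝ) (hx : 0 ≤ x) :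
    |((x + 1) * cos (c * (x + 1) + φ) - x * cos (c * x + φ)) ^ 2
      - (1 - cos c) * (x ^ 2 - x ^ 2 * cos (2 * c * x + (2 * φ + c)))| ≤ 4 * x + 1 := by
  set d := cos (c * x + φ + c) - cos (c * x + φ)
  set y := cos (c * x + φ + c)
  have hd : (1 - cos c) * (x ^ 2 - x ^ 2 * cos (2 * c * x + (2 * φ + c))) = x ^ 2 * d ^ 2 := by
    rw [cos_add_sub_cos_sq]; ring_nf
  have hsplit : (x + 1) * cos (c * (x + 1) + φ) - x * cos (c * x + φ) = x * d + y := by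
    rw [show c * (x + 1) + φ = c * x + φ + c by ring]; ring
  have hy : |y| ≤ 1 := abs_cos_le_one _
  have hd2 : |d| ≤ 2 := (abs_sub _ _).trans (by linarith [abs_cos_le_one (c * x + φ)])
  rw [hd, hsplit, show (x * d + y) ^ 2 - x ^ 2 * d ^ 2 = (2 * x * d + y) * y by ring, abs_mul]
  calc |2 * x * d + y| * |y| ≤ (2 * x * 2 + 1) * 1 := by
        gcongr
        refine (abs_add_le _ _).trans (add_le_add ?_ hy)
        rw [abs_mul, abs_of_nonneg (by positivity : 0 ≤ 2 * x)]
        gcongr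
    _ = 4 * x + 1 := by ring

theorem sum_range_sq_mul_six (N : ℕ) :
    (∑ n ∈ range N, (n : ℝ) ^ 2) * 6 = N * (N - 1) * (2 * N - 1) := by
  induction N with
  | zero => simp
  | succ N ih =>
    rw [sum_range_succ, add_mul, ih]
    push_cast
    ring

theorem tendsto_sum_range_sq_div_cube :
    Tendsto (fun N : ℕ => (∑ n ∈ range N, (n : ℝ) ^ 2) / N ^ 3) atTop (𝓝 (1 / 3)) := by
  have h := ((tendsto_const_nhds (x := (1 : ℝ))).sub tendsto_one_div_atTop_nhds_zero_nat).mul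
    ((tendsto_const_nhds (x := (2 : ℝ))).sub tendsto_one_div_atTop_nhds_zero_nat) |>.div_const 6
  rw [show ((1 : ℝ) - 0) * (2 - 0) / 6 = 1 / 3 by norm_num] at h
  refine h.congr' ?_
  filter_upwards [eventually_ne_atTop 0] with N hN
  have hN' : (N : ℝ) ≠ 0 := Nat.cast_ne_zero.2 hN
  rw [eq_div_iff (pow_ne_zero 3 hN')]
  field_simp
  linear_combination -(sum_range_sq_mul_six N)

theorem tendsto_div_pow_succ_of_abs_sub_le {u v : ℕ → ℝ} {k : ℕ} {l C : ℝ}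
    (hv : Tendsto (fun N : ℕ => v N / N ^ (k + 1)) atTop (𝓝 l))
    (huv : ∀ N, |u N - v N| ≤ C * N ^ k) :
    Tendsto (fun N : ℕ => u N / N ^ (k + 1)) atTop (𝓝 l) := by
  have herr : Tendsto (fun N : ℕ => (u N - v N) / N ^ (k + 1)) atTop (𝓝 0) := by
    refine squeeze_zero_norm' ?_ (tendsto_const_div_atTop_nhds_zero_nat C)
    filter_upwards [eventually_ne_atTop 0] with N hN
    have hN' : (0 : ℝ) < N := Nat.cast_pos.2 (Nat.pos_of_ne_zero hN)
    rw [norm_div, norm_eq_abs, norm_pow, norm_natCast, div_le_div_iff₀ (by positivity) hN',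
      pow_succ]
    nlinarith [huv N, pow_pos hN' k]
  simpa using (hv.add herr).congr fun N => by ring

theorem abs_sum_Icc_sq_sub_le {c : ℝ} (hc : sin c ≠ 0) (φ : ℝ) (N : ℕ) :
    |∑ n ∈ Icc 1 (N - 1), ((n + 1) * cos (c * (n + 1) + φ) - n * cos (c * n + φ)) ^ 2
      - (1 - cos c) * ∑ n ∈ range N, (n : ℝ) ^ 2| ≤ (4 + 4 / |sin c|) * N ^ 2 := by
  set ψ := 2 * φ + c
  set r : ℕ → ℝ := fun n => ((n + 1) * cos (c * (n + 1) + φ) - n * cos (c * n + φ)) ^ 2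
      - (1 - cos c) * (n ^ 2 - n ^ 2 * cos (2 * c * n + ψ))
  have hsplit : ∑ n ∈ Icc 1 (N - 1), ((n + 1) * cos (c * (n + 1) + φ) - n * cos (c * n + φ)) ^ 2
      - (1 - cos c) * ∑ n ∈ range N, (n : ℝ) ^ 2
      = ∑ n ∈ Icc 1 (N - 1), r n
        - (1 - cos c) * ∑ n ∈ range N, (n : ℝ) ^ 2 * cos (2 * c * n + ψ) := by
    simp only [r, sum_sub_distrib, ← mul_sum,
      sum_Icc_one_sub_one_eq_sum_range (f := fun n : ℕ => (n : ℝ) ^ 2) (by simp),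
      sum_Icc_one_sub_one_eq_sum_range (f := fun n : ℕ => (n : ℝ) ^ 2 * cos (2 * c * n + ψ))
        (by simp)]
    ring
  have hr : |∑ n ∈ Icc 1 (N - 1), r n| ≤ 4 * N ^ 2 := by
    refine (abs_sum_le_sum_abs _ _).trans ?_
    calc ∑ n ∈ Icc 1 (N - 1), |r n| ≤ #(Icc 1 (N - 1)) • (4 * N : ℝ) := by
          refine sum_le_card_nsmul _ _ _ fun n hn => ?_
          have hnN : (n : ℝ) + 1 ≤ N := by
            obtain ⟨h₁, h₂⟩ := mem_Icc.1 hn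
            exact_mod_cast (by omega : n + 1 ≤ N)
          exact (abs_sq_sub_one_sub_cos_mul_sq_le c φ n n.cast_nonneg).trans (by linarith)
      _ ≤ 4 * N ^ 2 := by
          rw [Nat.card_Icc, nsmul_eq_mul]
          have hcard : ((N - 1 + 1 - 1 : ℕ) : ℝ) ≤ N := by
            exact_mod_cast (by omega : N - 1 + 1 - 1 ≤ N)
          nlinarith [(Nat.cast_nonneg N : (0 : ℝ) ≤ N)]
  have hosc : |(1 - cos c) * ∑ n ∈ range N, (n : ℝ) ^ 2 * cos (2 * c * n + ψ)|
      ≤ 4 / |sin c| * N ^ 2 := by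
    rw [abs_mul, show 4 / |sin c| * N ^ 2 = 2 * (2 / |sin c| * N ^ 2) by ring]
    gcongr
    · exact (abs_sub _ _).trans (by linarith [abs_cos_le_one c, abs_one (α := ℝ)])
    · exact abs_sum_range_sq_mul_cos_le hc ψ N
  rw [hsplit]
  linarith [abs_sub (∑ n ∈ Icc 1 (N - 1), r n)
    ((1 - cos c) * ∑ n ∈ range N, (n : ℝ) ^ 2 * cos (2 * c * n + ψ))]

theorem tendsto_sum_Icc_sq_div_cube {c : ℝ} (hc : sin c ≠ 0) (φ : ℝ) :
    Tendsto (fun N : ℕ =>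
        (∑ n ∈ Icc 1 (N - 1), ((n + 1) * cos (c * (n + 1) + φ) - n * cos (c * n + φ)) ^ 2)
          / (N : ℝ) ^ 3)
      atTop (𝓝 ((1 - cos c) / 3)) := by
  have h := tendsto_sum_range_sq_div_cube.const_mul (1 - cos c)
  rw [← mul_div_assoc, mul_one] at h
  exact tendsto_div_pow_succ_of_abs_sub_le (k := 2) (h.congr fun N => (mul_div_assoc _ _ _).symm)
    (abs_sum_Icc_sq_sub_le hc φ)

theorem fisher_entry_22_asymptotics_general
    (a₁ T ω₁ φ₁ : ℝ) (hs : Real.sin (ω₁ * T) ≠ 0) :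
    Tendsto (fun N : ℕ =>
        (1 / (N : ℝ) ^ 3) *
          ∑ n ∈ Finset.Icc 1 (N - 1),
            (a₁ * T * ((n + 1) * Real.cos (ω₁ * T * (n + 1) + φ₁)
              - n * Real.cos (ω₁ * T * n + φ₁))) ^ 2)
      atTop (nhds (a₁ ^ 2 * T ^ 2 * (1 - Real.cos (ω₁ * T)) / 3)) := by
  have h := (tendsto_sum_Icc_sq_div_cube hs φ₁).const_mul ((a₁ * T) ^ 2)
  rw [mul_pow, ← mul_div_assoc] at h
  refine h.congr fun N => ?_
  simp only [mul_pow (a₁ * T), ← mul_sum]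
  ring

theorem fisher_entry_22_asymptotics
    (a₁ T ω₁ φ₁ : ℝ) (ha : a₁ ≠ 0) (hT : 0 < T) (hs : Real.sin (ω₁ * T) ≠ 0) :
    Tendsto (fun N : ℕ =>
        (1 / (N : ℝ) ^ 3) *
          ∑ n ∈ Finset.Icc 1 (N - 1),
            (a₁ * T * ((n + 1) * Real.cos (ω₁ * T * (n + 1) + φ₁)
              - n * Real.cos (ω₁ * T * n + φ₁))) ^ 2)
      atTop (nhds (a₁ ^ 2 * T ^ 2 * (1 - Real.cos (ω₁ * T)) / 3)) :=
  fisher_entry_22_asymptotics_general a₁ T ω₁ φ₁ hs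
end

section
/- Let a₁ ∈ ℝ with a₁ ≠ 0, and ω, φ ∈ ℝ with sin(ω) ≠ 0; set θ_n = ωn + φ. Then lim_{N→∞} (1/N) Σ_{n=1}^{N−1} (a₁(cos θ_{n+1} − cos θ_n))² = a₁²(1 − cos ω). -/
open Filter Finset Real

/- Each squared increment equals `(1 - cos ω) (1 - cos (2θₙ + ω))`, so the sum is `(1 - cos ω) N`
plus `-(1 - cos ω)` times a sum of cosines along an arithmetic progression of step `2ω`.
When `sin ω ≠ 0` that cosine sum telescopes (multiply by `2 sin ω`) and stays bounded, so it
disappears after dividing by `N`. -/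

theorem sq_cos_add_sub_cos (x ω : ℝ) :
    (cos (x + ω) - cos x) ^ 2 = (1 - cos ω) * (1 - cos (2 * x + ω)) := by
  rw [cos_add, show 2 * x + ω = x + (x + ω) by ring, cos_add x, cos_add, sin_add]
  linear_combination sin x ^ 2 * sin_sq_add_cos_sq ω + (1 - cos ω) * sin_sq_add_cos_sq x

theorem two_mul_sin_mul_cos_eq_sub (α x : ℝ) :
    2 * sin α * cos x = sin (x + α) - sin (x - α) := by
  rw [sin_add, sin_sub]
  ring

theorem abs_sum_Ico_cos_le {α : ℝ} (hα : sin α ≠ 0) (β : ℝ) (m n : ℕ) :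
    |∑ k ∈ Ico m n, cos (2 * α * k + β)| ≤ 1 / |sin α| := by
  rcases le_total m n with hmn | hnm
  · set g : ℕ → ℝ := fun k => sin (2 * α * k + β - α)
    have htele : 2 * sin α * ∑ k ∈ Ico m n, cos (2 * α * k + β) = g n - g m := by
      rw [mul_sum, ← sum_Ico_sub g hmn]
      refine sum_congr rfl fun k _ => ?_
      rw [two_mul_sin_mul_cos_eq_sub]
      simp only [g]
      push_cast
      ring_nf
    have hg : ∀ k, |g k| ≤ 1 := fun k => abs_sin_le_one _
    rw [le_div_iff₀ (abs_pos.mpr hα), mul_comm]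
    calc |sin α| * |∑ k ∈ Ico m n, cos (2 * α * k + β)|
        = |g n - g m| / 2 := by rw [← htele, abs_mul, abs_mul, abs_two]; ring
      _ ≤ (|g n| + |g m|) / 2 := by gcongr; exact abs_sub _ _
      _ ≤ 1 := by linarith [hg n, hg m]
  · rw [Ico_eq_empty_of_le hnm, sum_empty, abs_zero]
    positivity

theorem tendsto_one_div_mul_of_abs_sub_mul_le {u : ℕ → ℝ} {c C : ℝ}
    (h : ∀ N : ℕ, |u N - c * N| ≤ C) :
    Tendsto (fun N : ℕ => (1 / (N : ℝ)) * u N) atTop (nhds c) := by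
  have hdev : Tendsto (fun N : ℕ => (1 / (N : ℝ)) * (u N - c * N)) atTop (nhds 0) :=
    tendsto_one_div_atTop_nhds_zero_nat.zero_mul_isBoundedUnder_le
      (isBoundedUnder_of ⟨C, fun N => by simpa only [Function.comp_apply, norm_eq_abs] using h N⟩)
  refine (add_zero c ▸ hdev.const_add c).congr' ?_
  filter_upwards [eventually_ne_atTop 0] with N hN
  field_simp
  ring

theorem fisher_entry_33_asymptotics_general
    (a₁ ω φ : ℝ) (hω : Real.sin ω ≠ 0) :
    Tendsto (fun N : ℕ =>
        (1 / (N : ℝ)) *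
          ∑ n ∈ Finset.Icc 1 (N - 1),
            (a₁ * (Real.cos (ω * (n + 1) + φ) - Real.cos (ω * n + φ))) ^ 2)
      atTop (nhds (a₁ ^ 2 * (1 - Real.cos ω))) := by
  set c := a₁ ^ 2 * (1 - cos ω)
  set S : ℕ → ℝ := fun N => ∑ n ∈ Icc 1 (N - 1), cos (2 * ω * n + (2 * φ + ω))
  have hsum : ∀ N : ℕ, ∑ n ∈ Icc 1 (N - 1), (a₁ * (cos (ω * (n + 1) + φ) - cos (ω * n + φ))) ^ 2
      = c * ((N - 1 : ℕ) : ℝ) - c * S N := by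
    intro N
    have hterm : ∀ n : ℕ, (a₁ * (cos (ω * (n + 1) + φ) - cos (ω * n + φ))) ^ 2
        = c - c * cos (2 * ω * n + (2 * φ + ω)) := by
      intro n
      rw [mul_pow, show ω * (n + 1) + φ = (ω * n + φ) + ω by ring, sq_cos_add_sub_cos,
        show 2 * (ω * n + φ) + ω = 2 * ω * n + (2 * φ + ω) by ring]
      ring
    simp only [hterm, sum_sub_distrib, sum_const, nsmul_eq_mul, ← mul_sum, S]
    rw [Nat.card_Icc, add_tsub_cancel_right]
    ring
  refine tendsto_one_div_mul_of_abs_sub_mul_le (C := |c| * (1 + 1 / |sin ω|)) fun N => ?_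
  have hcard : |((N - 1 : ℕ) : ℝ) - N| ≤ 1 := by
    rcases N with _ | N <;> simp
  calc |_ - c * N| = |c| * |(((N - 1 : ℕ) : ℝ) - N) - S N| := by
        rw [hsum, ← abs_mul]
        ring_nf
    _ ≤ |c| * (1 + 1 / |sin ω|) := by
        gcongr
        refine (abs_sub _ _).trans (add_le_add hcard ?_)
        simpa only [S, ← Ico_add_one_right_eq_Icc] using abs_sum_Ico_cos_le hω _ 1 (N - 1 + 1)

theorem fisher_entry_33_asymptotics
    (a₁ ω φ : ℝ) (ha : a₁ ≠ 0) (hω : Real.sin ω ≠ 0) :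
    Tendsto (fun N : ℕ =>
        (1 / (N : ℝ)) *
          ∑ n ∈ Finset.Icc 1 (N - 1),
            (a₁ * (Real.cos (ω * (n + 1) + φ) - Real.cos (ω * n + φ))) ^ 2)
      atTop (nhds (a₁ ^ 2 * (1 - Real.cos ω))) :=
  fisher_entry_33_asymptotics_general a₁ ω φ hω
end

section
/- Let a₁ ∈ ℝ with a₁ ≠ 0, T > 0, and ω₁, φ₁ ∈ ℝ with sin(ω₁T) ≠ 0; set θ_n = ω₁Tn + φ₁. Then lim_{N→∞} (1/N²) Σ_{n=1}^{N−1} [a₁T((n+1)cos θ_{n+1} − n cos θ_n)]·[a₁(cos θ_{n+1} − cos θ_n)] = a₁²T(1 − cos(ω₁T))/2. -/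
open Filter

private lemma geom_Ico_bound (z : ℂ) (hz : ‖z‖ = 1) (h1 : z ≠ 1) (k m : ℕ) :
    ‖∑ n ∈ Finset.Ico k m, z ^ n‖ ≤ 2 / ‖z - 1‖ := by
  have hz0 : (0:ℝ) < ‖z - 1‖ := norm_pos_iff.mpr (sub_ne_zero.mpr h1)
  rcases le_or_gt m k with h | h
  · rw [Finset.Ico_eq_empty (by omega), Finset.sum_empty, norm_zero]
    positivity
  · rw [Finset.sum_Ico_eq_sub _ h.le, geom_sum_eq h1, geom_sum_eq h1,
      show (z ^ m - 1) / (z - 1) - (z ^ k - 1) / (z - 1) = (z ^ m - z ^ k) / (z - 1) by ring,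
      norm_div]
    have h2 : ‖z ^ m - z ^ k‖ ≤ 2 := by
      calc ‖z ^ m - z ^ k‖ ≤ ‖z ^ m‖ + ‖z ^ k‖ := norm_sub_le _ _
        _ = 2 := by rw [norm_pow, norm_pow, hz]; norm_num
    gcongr

private lemma linear_geom_bound (z : ℂ) (hz : ‖z‖ = 1) (h1 : z ≠ 1) (m : ℕ) :
    ‖∑ n ∈ Finset.Icc 1 m, (n : ℂ) * z ^ n‖ ≤ m * (2 / ‖z - 1‖) := by
  have step : ∀ n ∈ Finset.Icc 1 m, (n : ℂ) * z ^ n = ∑ _k ∈ Finset.Ico 1 (n + 1), z ^ n := by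
    intro n _
    rw [Finset.sum_const, Nat.card_Ico, nsmul_eq_mul]
    simp
  rw [Finset.sum_congr rfl step, ← Finset.Ico_add_one_right_eq_Icc,
    ← Finset.sum_Ico_Ico_comm 1 (m + 1) (fun _i j => z ^ j)]
  calc ‖∑ i ∈ Finset.Ico 1 (m + 1), ∑ j ∈ Finset.Ico i (m + 1), z ^ j‖
      ≤ ∑ i ∈ Finset.Ico 1 (m + 1), ‖∑ j ∈ Finset.Ico i (m + 1), z ^ j‖ :=
        norm_sum_le _ _
    _ ≤ ∑ _i ∈ Finset.Ico 1 (m + 1), (2 / ‖z - 1‖) :=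
        Finset.sum_le_sum fun i _ => geom_Ico_bound z hz h1 i (m + 1)
    _ = m * (2 / ‖z - 1‖) := by
        rw [Finset.sum_const, Nat.card_Ico, nsmul_eq_mul]
        norm_num

private lemma cos_as_re (α β : ℝ) (n : ℕ) :
    (n : ℝ) * Real.cos (α * n + β)
      = ((n : ℂ) * (Complex.exp (β * Complex.I) * Complex.exp (α * Complex.I) ^ n)).re := by
  have h : Complex.exp (β * Complex.I) * Complex.exp (α * Complex.I) ^ n
      = Complex.exp (((α * n + β : ℝ) : ℂ) * Complex.I) := by
    rw [← Complex.exp_nat_mul, ← Complex.exp_add]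
    congr 1
    push_cast
    ring
  rw [h, show ((n : ℂ)) = ((n : ℝ) : ℂ) by push_cast; ring, Complex.re_ofReal_mul,
    Complex.exp_ofReal_mul_I_re]

private lemma ncos_sum_bound (α β : ℝ) (h1 : Complex.exp (α * Complex.I) ≠ 1) (m : ℕ) :
    |∑ n ∈ Finset.Icc 1 m, (n : ℝ) * Real.cos (α * n + β)|
      ≤ (2 / ‖Complex.exp ((α : ℂ) * Complex.I) - 1‖) * m := by
  set z := Complex.exp ((α : ℂ) * Complex.I) with hzdef
  have hz1 : ‖z‖ = 1 := Complex.norm_exp_ofReal_mul_I α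
  have e : ∑ n ∈ Finset.Icc 1 m, (n : ℝ) * Real.cos (α * n + β)
      = (Complex.exp ((β : ℂ) * Complex.I) * ∑ n ∈ Finset.Icc 1 m, (n : ℂ) * z ^ n).re := by
    rw [Finset.mul_sum, Complex.re_sum]
    refine Finset.sum_congr rfl fun n _ => ?_
    rw [cos_as_re α β n]
    congr 1
    ring
  rw [e]
  calc |(Complex.exp ((β : ℂ) * Complex.I) * ∑ n ∈ Finset.Icc 1 m, (n : ℂ) * z ^ n).re|
      ≤ ‖Complex.exp ((β : ℂ) * Complex.I) * ∑ n ∈ Finset.Icc 1 m, (n : ℂ) * z ^ n‖ :=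
        Complex.abs_re_le_norm _
    _ = ‖∑ n ∈ Finset.Icc 1 m, (n : ℂ) * z ^ n‖ := by
        rw [norm_mul, Complex.norm_exp_ofReal_mul_I, one_mul]
    _ ≤ m * (2 / ‖z - 1‖) := linear_geom_bound z hz1 h1 m
    _ = (2 / ‖z - 1‖) * m := mul_comm _ _

private lemma tendsto_of_linear_bound (f : ℕ → ℝ) (C : ℝ)
    (h : ∀ m : ℕ, |∑ n ∈ Finset.Icc 1 m, f n| ≤ C * m) :
    Tendsto (fun N : ℕ => (1 / (N : ℝ) ^ 2) * ∑ n ∈ Finset.Icc 1 (N - 1), f n)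
      atTop (nhds 0) := by
  have hC : 0 ≤ C := by
    have h1 := h 1
    have h0 : (0:ℝ) ≤ |∑ n ∈ Finset.Icc 1 1, f n| := abs_nonneg _
    push_cast at h1
    linarith
  refine squeeze_zero_norm (fun N => ?_) (tendsto_const_div_atTop_nhds_zero_nat C)
  rcases Nat.eq_zero_or_pos N with rfl | hN
  · simp
  · have hNR : (0:ℝ) < (N : ℝ) := by exact_mod_cast hN
    have h1 := h (N - 1)
    have hle : ((N - 1 : ℕ) : ℝ) ≤ (N : ℝ) := by
      exact_mod_cast Nat.sub_le N 1
    have hS : |∑ n ∈ Finset.Icc 1 (N - 1), f n| ≤ C * N := by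
      calc |∑ n ∈ Finset.Icc 1 (N - 1), f n| ≤ C * ((N - 1 : ℕ) : ℝ) := h1
        _ ≤ C * N := by nlinarith
    rw [Real.norm_eq_abs, abs_mul, abs_of_nonneg (by positivity : (0:ℝ) ≤ 1 / (N:ℝ)^2)]
    calc 1 / (N:ℝ)^2 * |∑ n ∈ Finset.Icc 1 (N - 1), f n|
        ≤ 1 / (N:ℝ)^2 * (C * N) := by
          apply mul_le_mul_of_nonneg_left hS (by positivity)
      _ = C / N := by field_simp

private lemma tendsto_ncos (α β : ℝ) (h1 : Complex.exp ((α : ℂ) * Complex.I) ≠ 1) :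
    Tendsto (fun N : ℕ =>
        (1 / (N : ℝ) ^ 2) * ∑ n ∈ Finset.Icc 1 (N - 1), (n : ℝ) * Real.cos (α * n + β))
      atTop (nhds 0) :=
  tendsto_of_linear_bound _ (2 / ‖Complex.exp ((α : ℂ) * Complex.I) - 1‖)
    (fun m => ncos_sum_bound α β h1 m)

private lemma tendsto_bdd (f : ℕ → ℝ) (C : ℝ) (hC : 0 ≤ C) (h : ∀ n, |f n| ≤ C) :
    Tendsto (fun N : ℕ => (1 / (N : ℝ) ^ 2) * ∑ n ∈ Finset.Icc 1 (N - 1), f n)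
      atTop (nhds 0) := by
  apply tendsto_of_linear_bound f C
  intro m
  calc |∑ n ∈ Finset.Icc 1 m, f n| ≤ ∑ n ∈ Finset.Icc 1 m, |f n| :=
        Finset.abs_sum_le_sum_abs _ _
    _ ≤ ∑ _n ∈ Finset.Icc 1 m, C := Finset.sum_le_sum fun n _ => h n
    _ = C * m := by rw [Finset.sum_const, Nat.card_Icc, nsmul_eq_mul]; push_cast; ring

private lemma tendsto_sum_id :
    Tendsto (fun N : ℕ => (1 / (N : ℝ) ^ 2) * ∑ n ∈ Finset.Icc 1 (N - 1), (n : ℝ))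
      atTop (nhds (1 / 2)) := by
  have key : ∀ m : ℕ, ∑ n ∈ Finset.Icc 1 m, (n : ℝ) = m * (m + 1) / 2 := by
    intro m
    induction m with
    | zero => simp
    | succ k ih =>
        rw [Finset.sum_Icc_succ_top (by omega), ih]
        push_cast
        ring
  have hlim : Tendsto (fun N : ℕ => (1 - 1 / (N : ℝ)) / 2) atTop (nhds (1 / 2)) := by
    have := (tendsto_const_nhds (x := (1:ℝ)) (f := atTop (α := ℕ))).sub
      tendsto_one_div_atTop_nhds_zero_nat
    have h2 := this.div_const 2
    simpa using h2
  apply hlim.congr'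
  filter_upwards [eventually_ge_atTop 1] with N hN
  rw [key]
  have hc : ((N - 1 : ℕ) : ℝ) = (N : ℝ) - 1 := by
    rw [Nat.cast_sub hN]; simp
  have hN0 : (N : ℝ) ≠ 0 := by
    have : (0:ℝ) < N := by exact_mod_cast hN
    linarith
  rw [hc]
  field_simp
  ring

theorem fisher_entry_23_asymptotics
    (a₁ T ω₁ φ₁ : ℝ) (ha : a₁ ≠ 0) (hT : 0 < T) (hs : Real.sin (ω₁ * T) ≠ 0) :
    Tendsto (fun N : ℕ =>
        (1 / (N : ℝ) ^ 2) *
          ∑ n ∈ Finset.Icc 1 (N - 1),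
            (a₁ * T * ((n + 1) * Real.cos (ω₁ * T * (n + 1) + φ₁)
                - n * Real.cos (ω₁ * T * n + φ₁))) *
              (a₁ * (Real.cos (ω₁ * T * (n + 1) + φ₁) - Real.cos (ω₁ * T * n + φ₁))))
      atTop (nhds (a₁ ^ 2 * T * (1 - Real.cos (ω₁ * T)) / 2)) := by
  set ψ := ω₁ * T with hψdef
  -- exp (2ψ i) ≠ 1
  have hz : Complex.exp (((2 * ψ : ℝ) : ℂ) * Complex.I) ≠ 1 := by
    intro hcon
    rw [Complex.exp_eq_one_iff] at hcon
    obtain ⟨k, hk⟩ := hcon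
    have hI : ((2 * ψ : ℝ) : ℂ) * Complex.I = ((k : ℂ) * (2 * (Real.pi : ℂ))) * Complex.I := by
      rw [hk]; ring
    have h2 : ((2 * ψ : ℝ) : ℂ) = (k : ℂ) * (2 * (Real.pi : ℂ)) :=
      mul_right_cancel₀ Complex.I_ne_zero hI
    have h3 : (2 * ψ : ℝ) = (k : ℝ) * (2 * Real.pi) := by exact_mod_cast h2
    apply hs
    rw [show ψ = (k : ℝ) * Real.pi by linarith]
    exact Real.sin_int_mul_pi k
  -- pointwise decomposition
  have ptwise : ∀ n : ℕ,
      (a₁ * T * (((n : ℝ) + 1) * Real.cos (ψ * ((n : ℝ) + 1) + φ₁)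
          - (n : ℝ) * Real.cos (ψ * (n : ℝ) + φ₁))) *
        (a₁ * (Real.cos (ψ * ((n : ℝ) + 1) + φ₁) - Real.cos (ψ * (n : ℝ) + φ₁)))
      = (a₁ ^ 2 * T * (1 - Real.cos ψ)) * (n : ℝ)
        + ((a₁ ^ 2 * T / 2) * ((n : ℝ) * Real.cos (2 * ψ * (n : ℝ) + (2 * ψ + 2 * φ₁)))
        + ((a₁ ^ 2 * T / 2) * ((n : ℝ) * Real.cos (2 * ψ * (n : ℝ) + 2 * φ₁))
        + ((-(a₁ ^ 2 * T)) * ((n : ℝ) * Real.cos (2 * ψ * (n : ℝ) + (ψ + 2 * φ₁)))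
        + (a₁ ^ 2 * T) * (Real.cos (ψ * ((n : ℝ) + 1) + φ₁) *
            (Real.cos (ψ * ((n : ℝ) + 1) + φ₁) - Real.cos (ψ * (n : ℝ) + φ₁)))))) := by
    intro n
    have e1 : Real.cos (2 * ψ * (n : ℝ) + (2 * ψ + 2 * φ₁))
        = Real.cos (2 * (ψ * ((n : ℝ) + 1) + φ₁)) := by congr 1; ring
    have e2 : Real.cos (2 * ψ * (n : ℝ) + 2 * φ₁)
        = Real.cos (2 * (ψ * (n : ℝ) + φ₁)) := by congr 1; ring
    have e3 : Real.cos (2 * ψ * (n : ℝ) + (ψ + 2 * φ₁))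
        = Real.cos ((ψ * ((n : ℝ) + 1) + φ₁) + (ψ * (n : ℝ) + φ₁)) := by congr 1; ring
    rw [e1, e2, e3]
    have h1 := Real.cos_sq (ψ * ((n : ℝ) + 1) + φ₁)
    have h2 := Real.cos_sq (ψ * (n : ℝ) + φ₁)
    have h3 : Real.cos (ψ * ((n : ℝ) + 1) + φ₁) * Real.cos (ψ * (n : ℝ) + φ₁)
        = (Real.cos ψ + Real.cos ((ψ * ((n : ℝ) + 1) + φ₁) + (ψ * (n : ℝ) + φ₁))) / 2 := by
      have h := Real.two_mul_cos_mul_cos (ψ * ((n : ℝ) + 1) + φ₁) (ψ * (n : ℝ) + φ₁)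
      rw [show (ψ * ((n : ℝ) + 1) + φ₁) - (ψ * (n : ℝ) + φ₁) = ψ by ring] at h
      linarith
    linear_combination (a₁ ^ 2 * T * (n : ℝ)) * h1 + (a₁ ^ 2 * T * (n : ℝ)) * h2
      - (2 * a₁ ^ 2 * T * (n : ℝ)) * h3
  -- function decomposition
  have hfun : (fun N : ℕ =>
        (1 / (N : ℝ) ^ 2) *
          ∑ n ∈ Finset.Icc 1 (N - 1),
            (a₁ * T * ((n + 1) * Real.cos (ω₁ * T * (n + 1) + φ₁)
                - n * Real.cos (ω₁ * T * n + φ₁))) *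
              (a₁ * (Real.cos (ω₁ * T * (n + 1) + φ₁) - Real.cos (ω₁ * T * n + φ₁))))
      = (fun N : ℕ =>
          (a₁ ^ 2 * T * (1 - Real.cos ψ)) *
            ((1 / (N : ℝ) ^ 2) * ∑ n ∈ Finset.Icc 1 (N - 1), (n : ℝ))
          + ((a₁ ^ 2 * T / 2) * ((1 / (N : ℝ) ^ 2) *
              ∑ n ∈ Finset.Icc 1 (N - 1), (n : ℝ) * Real.cos (2 * ψ * n + (2 * ψ + 2 * φ₁)))
          + ((a₁ ^ 2 * T / 2) * ((1 / (N : ℝ) ^ 2) *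
              ∑ n ∈ Finset.Icc 1 (N - 1), (n : ℝ) * Real.cos (2 * ψ * n + 2 * φ₁))
          + ((-(a₁ ^ 2 * T)) * ((1 / (N : ℝ) ^ 2) *
              ∑ n ∈ Finset.Icc 1 (N - 1), (n : ℝ) * Real.cos (2 * ψ * n + (ψ + 2 * φ₁)))
          + ((1 / (N : ℝ) ^ 2) *
              ∑ n ∈ Finset.Icc 1 (N - 1), (a₁ ^ 2 * T) * (Real.cos (ψ * ((n : ℝ) + 1) + φ₁) *
                (Real.cos (ψ * ((n : ℝ) + 1) + φ₁) - Real.cos (ψ * (n : ℝ) + φ₁)))))))) := by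
    funext N
    rw [Finset.sum_congr rfl (fun n _ => ptwise n)]
    simp only [Finset.sum_add_distrib, ← Finset.mul_sum]
    ring
  rw [hfun,
    show a₁ ^ 2 * T * (1 - Real.cos (ω₁ * T)) / 2
      = (a₁ ^ 2 * T * (1 - Real.cos ψ)) * (1 / 2)
        + ((a₁ ^ 2 * T / 2) * 0 + ((a₁ ^ 2 * T / 2) * 0 + ((-(a₁ ^ 2 * T)) * 0 + 0))) by
        rw [← hψdef]; ring]
  refine (tendsto_sum_id.const_mul _).add ?_
  refine ((tendsto_ncos (2 * ψ) (2 * ψ + 2 * φ₁) hz).const_mul _).add ?_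
  refine ((tendsto_ncos (2 * ψ) (2 * φ₁) hz).const_mul _).add ?_
  refine ((tendsto_ncos (2 * ψ) (ψ + 2 * φ₁) hz).const_mul _).add ?_
  apply tendsto_bdd _ (2 * |a₁ ^ 2 * T|) (by positivity)
  intro n
  have hca : |Real.cos (ψ * ((n : ℝ) + 1) + φ₁)| ≤ 1 := Real.abs_cos_le_one _
  have hd : |Real.cos (ψ * ((n : ℝ) + 1) + φ₁) - Real.cos (ψ * (n : ℝ) + φ₁)| ≤ 2 := by
    have b1 := Real.cos_le_one (ψ * ((n : ℝ) + 1) + φ₁)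
    have b2 := Real.neg_one_le_cos (ψ * ((n : ℝ) + 1) + φ₁)
    have b3 := Real.cos_le_one (ψ * (n : ℝ) + φ₁)
    have b4 := Real.neg_one_le_cos (ψ * (n : ℝ) + φ₁)
    rw [abs_le]
    constructor <;> linarith
  calc |(a₁ ^ 2 * T) * (Real.cos (ψ * ((n : ℝ) + 1) + φ₁) *
          (Real.cos (ψ * ((n : ℝ) + 1) + φ₁) - Real.cos (ψ * (n : ℝ) + φ₁)))|
      = |a₁ ^ 2 * T| * (|Real.cos (ψ * ((n : ℝ) + 1) + φ₁)| *
          |Real.cos (ψ * ((n : ℝ) + 1) + φ₁) - Real.cos (ψ * (n : ℝ) + φ₁)|) := by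
        rw [abs_mul (a₁ ^ 2 * T), abs_mul (Real.cos (ψ * ((n : ℝ) + 1) + φ₁))
          (Real.cos (ψ * ((n : ℝ) + 1) + φ₁) - Real.cos (ψ * (n : ℝ) + φ₁))]
    _ ≤ |a₁ ^ 2 * T| * (1 * 2) := by
        apply mul_le_mul_of_nonneg_left _ (abs_nonneg _)
        exact mul_le_mul hca hd (abs_nonneg _) zero_le_one
    _ = 2 * |a₁ ^ 2 * T| := by ring
end

section
/- Let ω, φ ∈ ℝ with sin(ω) ≠ 0; set θ_n = ωn + φ. Then lim_{N→∞} (1/N) Σ_{n=1}^{N−1} (sin θ_{n+1} − sin θ_n)(cos θ_{n+1} − cos θ_n) = 0. -/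
open Filter

lemma sin_tel_bound (ω : ℝ) (hω : Real.sin ω ≠ 0) (c : ℝ) (M : ℕ) :
    |∑ n ∈ Finset.Icc 1 M, Real.sin (2 * ω * n + c)| ≤ 1 / |Real.sin ω| := by
  set f : ℕ → ℝ := fun n => Real.cos (2 * ω * n + c - ω) with hf
  have key : ∀ n : ℕ, Real.sin (2 * ω * n + c)
      = (f n - f (n + 1)) / (2 * Real.sin ω) := by
    intro n
    have h := Real.cos_sub_cos (2 * ω * n + c - ω) (2 * ω * (n + 1 : ℕ) + c - ω)
    have h1 : (2 * ω * n + c - ω + (2 * ω * (n + 1 : ℕ) + c - ω)) / 2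
        = 2 * ω * n + c := by push_cast; ring
    have h2 : (2 * ω * n + c - ω - (2 * ω * (n + 1 : ℕ) + c - ω)) / 2 = -ω := by
      push_cast; ring
    rw [h1, h2, Real.sin_neg] at h
    simp only [hf]
    rw [h]
    field_simp
  have tel : ∀ K : ℕ, ∑ n ∈ Finset.Icc 1 K, (f n - f (n + 1)) = f 1 - f (K + 1) := by
    intro K
    induction K with
    | zero => simp
    | succ k ih =>
        rw [Finset.sum_Icc_succ_top (by omega), ih]
        ring
  have hsum : ∑ n ∈ Finset.Icc 1 M, Real.sin (2 * ω * n + c)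
      = (f 1 - f (M + 1)) / (2 * Real.sin ω) := by
    rw [Finset.sum_congr rfl (fun n _ => key n), ← Finset.sum_div, tel M]
  rw [hsum, abs_div]
  have hb : |f 1 - f (M + 1)| ≤ 2 := by
    calc |f 1 - f (M + 1)| ≤ |f 1| + |f (M + 1)| := abs_sub _ _
      _ ≤ 1 + 1 := by
          gcongr <;> exact Real.abs_cos_le_one _
      _ = 2 := by norm_num
  have h2 : |2 * Real.sin ω| = 2 * |Real.sin ω| := by
    rw [abs_mul]; norm_num
  rw [h2]
  rw [div_le_div_iff₀ (by positivity) (by positivity)]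
  nlinarith [abs_pos.mpr hω]

theorem fisher_entry_13_asymptotics
    (ω φ : ℝ) (hω : Real.sin ω ≠ 0) :
    Tendsto (fun N : ℕ =>
        (1 / (N : ℝ)) *
          ∑ n ∈ Finset.Icc 1 (N - 1),
            (Real.sin (ω * (n + 1) + φ) - Real.sin (ω * n + φ)) *
              (Real.cos (ω * (n + 1) + φ) - Real.cos (ω * n + φ)))
      atTop (nhds 0) := by
  have habid : ∀ a b : ℝ, (Real.sin a - Real.sin b) * (Real.cos a - Real.cos b)
      = (1/2) * Real.sin (2*a) + (1/2) * Real.sin (2*b) - Real.sin (a + b) := by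
    intro a b
    rw [Real.sin_two_mul, Real.sin_two_mul, Real.sin_add]
    ring
  have hterm : ∀ n : ℕ,
      (Real.sin (ω * (n + 1) + φ) - Real.sin (ω * n + φ)) *
        (Real.cos (ω * (n + 1) + φ) - Real.cos (ω * n + φ))
      = (1/2) * Real.sin (2*ω*n + (2*ω+2*φ)) + (1/2) * Real.sin (2*ω*n + 2*φ)
        - Real.sin (2*ω*n + (ω+2*φ)) := by
    intro n
    have e1 : 2*ω*(n:ℝ) + (2*ω+2*φ) = 2*(ω*(n+1)+φ) := by ring
    have e2 : 2*ω*(n:ℝ) + 2*φ = 2*(ω*n+φ) := by ring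
    have e3 : 2*ω*(n:ℝ) + (ω+2*φ) = (ω*(n+1)+φ) + (ω*n+φ) := by ring
    rw [habid (ω*(n+1)+φ) (ω*n+φ), e1, e2, e3]
  have hSbound : ∀ N : ℕ,
      |∑ n ∈ Finset.Icc 1 (N - 1),
          (Real.sin (ω * (n + 1) + φ) - Real.sin (ω * n + φ)) *
            (Real.cos (ω * (n + 1) + φ) - Real.cos (ω * n + φ))|
        ≤ 2 / |Real.sin ω| := by
    intro N
    rw [Finset.sum_congr rfl (fun n _ => hterm n)]
    have hsplit : ∑ n ∈ Finset.Icc 1 (N - 1),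
        ((1/2) * Real.sin (2*ω*n + (2*ω+2*φ)) + (1/2) * Real.sin (2*ω*n + 2*φ)
          - Real.sin (2*ω*n + (ω+2*φ)))
        = (1/2) * (∑ n ∈ Finset.Icc 1 (N-1), Real.sin (2*ω*n + (2*ω+2*φ)))
          + (1/2) * (∑ n ∈ Finset.Icc 1 (N-1), Real.sin (2*ω*n + 2*φ))
          - (∑ n ∈ Finset.Icc 1 (N-1), Real.sin (2*ω*n + (ω+2*φ))) := by
      rw [Finset.sum_sub_distrib, Finset.sum_add_distrib, Finset.mul_sum, Finset.mul_sum]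
    rw [hsplit]
    have b1 := sin_tel_bound ω hω (2*ω+2*φ) (N-1)
    have b2 := sin_tel_bound ω hω (2*φ) (N-1)
    have b3 := sin_tel_bound ω hω (ω+2*φ) (N-1)
    have habs : ∀ x y z : ℝ, |(1/2)*x + (1/2)*y - z| ≤ (1/2)*|x| + (1/2)*|y| + |z| := by
      intro x y z
      have hhalf : |(1/2 : ℝ)| = 1/2 := abs_of_nonneg (by norm_num)
      calc |(1/2)*x + (1/2)*y - z| ≤ |(1/2)*x + (1/2)*y| + |z| := abs_sub _ _
        _ ≤ |(1/2)*x| + |(1/2)*y| + |z| := by gcongr; exact abs_add_le _ _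
        _ = (1/2)*|x| + (1/2)*|y| + |z| := by rw [abs_mul, abs_mul, hhalf]
    calc |(1/2) * (∑ n ∈ Finset.Icc 1 (N-1), Real.sin (2*ω*n + (2*ω+2*φ)))
          + (1/2) * (∑ n ∈ Finset.Icc 1 (N-1), Real.sin (2*ω*n + 2*φ))
          - (∑ n ∈ Finset.Icc 1 (N-1), Real.sin (2*ω*n + (ω+2*φ)))|
        ≤ (1/2)*|∑ n ∈ Finset.Icc 1 (N-1), Real.sin (2*ω*n + (2*ω+2*φ))|
          + (1/2)*|∑ n ∈ Finset.Icc 1 (N-1), Real.sin (2*ω*n + 2*φ)|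
          + |∑ n ∈ Finset.Icc 1 (N-1), Real.sin (2*ω*n + (ω+2*φ))| := habs _ _ _
      _ ≤ (1/2)*(1/|Real.sin ω|) + (1/2)*(1/|Real.sin ω|) + (1/|Real.sin ω|) := by
          gcongr
      _ = 2 / |Real.sin ω| := by ring
  apply squeeze_zero_norm (a := fun N : ℕ => (2 / |Real.sin ω|) / N)
  · intro N
    rw [Real.norm_eq_abs, abs_mul]
    have h1 : |1 / (N : ℝ)| = 1 / N := by
      rw [abs_div, abs_one, Nat.abs_cast]
    rw [h1]
    calc (1 / (N:ℝ)) * |_| ≤ (1 / N) * (2 / |Real.sin ω|) := by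
          gcongr
          exact hSbound N
      _ = (2 / |Real.sin ω|) / N := by ring
  · exact tendsto_const_div_atTop_nhds_zero_nat _
end

section
/- Let σ > 0, λ > 0, p ∈ ℝ, and let φ(v) = (1/(2σ√π))·exp(−v²/(4σ²)) be the density of the Gaussian distribution N(0, 2σ²). Then ∫_ℝ |p·(φ(v+2λ) + φ(v−2λ) − 2φ(v))|² dv = (p²/(2√(2π)·σ))·(6 + 2·exp(−4λ²/(2σ²)) − 8·exp(−λ²/(2σ²))). -/
/-!
Expanding the square turns the integral into a combination of overlap integrals of two
Gaussian bumps `exp (-c (v - a)²)` and `exp (-c (v - b)²)`. Completing the square, their product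
is again a Gaussian bump, centred at `(a + b) / 2`, times the constant `exp (-c (a - b)² / 2)`,
so its integral is elementary. The three centres `-2λ, 2λ, 0` give the separations
`0, 4λ, 2λ`, which produce the constant term and the two exponentials.
-/

open MeasureTheory Real

section OverlapIntegral

variable (c a b : ℝ)

theorem exp_neg_mul_sq_sub_mul_exp_neg_mul_sq_sub (v : ℝ) :
    exp (-c * (v - a) ^ 2) * exp (-c * (v - b) ^ 2)
      = exp (-(c / 2) * (a - b) ^ 2) * exp (-(2 * c) * (v - (a + b) / 2) ^ 2) := by
  rw [← exp_add, ← exp_add]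
  ring_nf

variable {c} in
theorem integrable_exp_neg_mul_sq_sub_mul_exp_neg_mul_sq_sub (hc : 0 < c) :
    Integrable fun v : ℝ => exp (-c * (v - a) ^ 2) * exp (-c * (v - b) ^ 2) := by
  simp_rw [exp_neg_mul_sq_sub_mul_exp_neg_mul_sq_sub]
  exact ((integrable_exp_neg_mul_sq (by positivity)).comp_sub_right _).const_mul _

theorem integral_exp_neg_mul_sq_sub_mul_exp_neg_mul_sq_sub :
    ∫ v : ℝ, exp (-c * (v - a) ^ 2) * exp (-c * (v - b) ^ 2)
      = √(π / (2 * c)) * exp (-(c / 2) * (a - b) ^ 2) := by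
  simp_rw [exp_neg_mul_sq_sub_mul_exp_neg_mul_sq_sub, integral_const_mul,
    integral_sub_right_eq_self (fun v => exp (-(2 * c) * v ^ 2)), integral_gaussian]
  ring

end OverlapIntegral

theorem integral_sq_sum_mul {α ι : Type*} [MeasurableSpace α] {μ : Measure α}
    (s : Finset ι) (w : ι → ℝ) (f : ι → α → ℝ)
    (hf : ∀ i ∈ s, ∀ j ∈ s, Integrable (fun x => f i x * f j x) μ) :
    ∫ x, (∑ i ∈ s, w i * f i x) ^ 2 ∂μ
      = ∑ i ∈ s, ∑ j ∈ s, w i * w j * ∫ x, f i x * f j x ∂μ := by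
  have hexpand : ∀ x, (∑ i ∈ s, w i * f i x) ^ 2
      = ∑ i ∈ s, ∑ j ∈ s, w i * w j * (f i x * f j x) := fun x => by
    rw [sq, Finset.sum_mul_sum]
    exact Finset.sum_congr rfl fun i _ => Finset.sum_congr rfl fun j _ => by ring
  simp_rw [hexpand]
  rw [integral_finsetSum _ fun i hi =>
    integrable_finsetSum _ fun j hj => (hf i hi j hj).const_mul _]
  refine Finset.sum_congr rfl fun i hi => ?_
  rw [integral_finsetSum _ fun j hj => (hf i hi j hj).const_mul _]
  simp_rw [integral_const_mul]

theorem mixture_L2_distance_general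
    (σ lam p : ℝ) (hσ : 0 < σ) :
    (∫ v : ℝ,
        |p * (((1 / (2 * σ * Real.sqrt Real.pi)) * Real.exp (-(v + 2 * lam) ^ 2 / (4 * σ ^ 2)))
            + ((1 / (2 * σ * Real.sqrt Real.pi)) * Real.exp (-(v - 2 * lam) ^ 2 / (4 * σ ^ 2)))
            - 2 * ((1 / (2 * σ * Real.sqrt Real.pi)) * Real.exp (-v ^ 2 / (4 * σ ^ 2))))| ^ 2)
      = (p ^ 2 / (2 * Real.sqrt (2 * Real.pi) * σ)) *
          (6 + 2 * Real.exp (-(4 * lam ^ 2) / (2 * σ ^ 2))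
            - 8 * Real.exp (-(lam ^ 2) / (2 * σ ^ 2))) := by
  set c : ℝ := 1 / (4 * σ ^ 2)
  have hc : 0 < c := by positivity
  have hintegrand : ∀ v : ℝ,
      |p * (((1 / (2 * σ * √π)) * exp (-(v + 2 * lam) ^ 2 / (4 * σ ^ 2)))
            + ((1 / (2 * σ * √π)) * exp (-(v - 2 * lam) ^ 2 / (4 * σ ^ 2)))
            - 2 * ((1 / (2 * σ * √π)) * exp (-v ^ 2 / (4 * σ ^ 2))))| ^ 2
      = (p / (2 * σ * √π)) ^ 2 *
          (∑ i, ![1, 1, -2] i * exp (-c * (v - ![-2 * lam, 2 * lam, 0] i) ^ 2)) ^ 2 := by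
    intro v
    simp only [c, sq_abs, Fin.sum_univ_three, Matrix.cons_val_zero, Matrix.cons_val_one,
      Matrix.cons_val]
    ring_nf
  have hoverlap : ∀ a b, ∫ v, exp (-c * (v - a) ^ 2) * exp (-c * (v - b) ^ 2)
      = σ * √(2 * π) * exp (-(a - b) ^ 2 / (8 * σ ^ 2)) := by
    intro a b
    rw [integral_exp_neg_mul_sq_sub_mul_exp_neg_mul_sq_sub,
      show π / (2 * c) = σ ^ 2 * (2 * π) by simp only [c]; field_simp; ring,
      sqrt_mul (sq_nonneg σ), sqrt_sq hσ.le]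
    congr 2
    simp only [c]
    ring
  simp_rw [hintegrand, integral_const_mul]
  rw [integral_sq_sum_mul _ _ _ fun i _ j _ =>
    integrable_exp_neg_mul_sq_sub_mul_exp_neg_mul_sq_sub _ _ hc]
  simp only [hoverlap, Fin.sum_univ_three, Matrix.cons_val_zero, Matrix.cons_val_one,
    Matrix.cons_val]
  ring_nf
  field_simp
  rw [sq_sqrt (by positivity), sq_sqrt pi_nonneg, exp_zero]
  ring

/-- Equation (11) of the paper: squared L²-distance between the Gaussian density and
the three-component Gaussian-mixture perturbation coming from modulo folds. -/
theorem mixture_L2_distance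
    (σ lam p : ℝ) (hσ : 0 < σ) (hlam : 0 < lam) :
    (∫ v : ℝ,
        |p * (((1 / (2 * σ * Real.sqrt Real.pi)) * Real.exp (-(v + 2 * lam) ^ 2 / (4 * σ ^ 2)))
            + ((1 / (2 * σ * Real.sqrt Real.pi)) * Real.exp (-(v - 2 * lam) ^ 2 / (4 * σ ^ 2)))
            - 2 * ((1 / (2 * σ * Real.sqrt Real.pi)) * Real.exp (-v ^ 2 / (4 * σ ^ 2))))| ^ 2)
      = (p ^ 2 / (2 * Real.sqrt (2 * Real.pi) * σ)) *
          (6 + 2 * Real.exp (-(4 * lam ^ 2) / (2 * σ ^ 2))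
            - 8 * Real.exp (-(lam ^ 2) / (2 * σ ^ 2))) :=
  mixture_L2_distance_general σ lam p hσ
end

section
/- Let a, b ∈ ℚ (viewed as real numbers) with a ≠ 0, and let n₁, n₂ ∈ ℤ with n₁ ≠ n₂. If |sin(a·n₁ + b)| = |sin(a·n₂ + b)|, then a·(n₁ + n₂) + 2b = 0. -/
open Real

lemma rat_eq_int_mul_pi {q : ℚ} {k : ℤ} (h : (q : ℝ) = k * π) : (q : ℝ) = 0 := by
  rcases eq_or_ne k 0 with hk | hk
  · simp [h, hk]
  · exfalso
    apply irrational_pi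
    refine ⟨q / k, ?_⟩
    push_cast
    rw [div_eq_iff (by exact_mod_cast hk), h, mul_comm]

theorem equal_magnitude_samples_symmetric
    (a b : ℚ) (ha : a ≠ 0) (n₁ n₂ : ℤ) (hne : n₁ ≠ n₂)
    (h : |Real.sin ((a : ℝ) * n₁ + (b : ℝ))| = |Real.sin ((a : ℝ) * n₂ + (b : ℝ))|) :
    (a : ℝ) * ((n₁ : ℝ) + (n₂ : ℝ)) + 2 * (b : ℝ) = 0 := by
  set x : ℝ := (a : ℝ) * n₁ + (b : ℝ) with hx
  set y : ℝ := (a : ℝ) * n₂ + (b : ℝ) with hy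
  have hsq : Real.sin x ^ 2 = Real.sin y ^ 2 := by
    rw [← sq_abs, ← sq_abs (Real.sin y), h]
  have hcsq : Real.cos x ^ 2 = Real.cos y ^ 2 := by
    nlinarith [Real.sin_sq_add_cos_sq x, Real.sin_sq_add_cos_sq y]
  have hcc : Real.cos (2 * x) = Real.cos (2 * y) := by
    rw [Real.cos_two_mul, Real.cos_two_mul, hcsq]
  rw [Real.cos_eq_cos_iff] at hcc
  obtain ⟨k, hk | hk⟩ := hcc
  · -- 2y = 2kπ + 2x, so y - x = kπ, but y - x is rational nonzero
    exfalso
    have hyx : ((a * (n₂ - n₁) : ℚ) : ℝ) = (k : ℝ) * π := by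
      push_cast
      linarith
    have := rat_eq_int_mul_pi hyx
    have hz : a * ((n₂ : ℚ) - n₁) = 0 := by exact_mod_cast this
    rcases mul_eq_zero.mp hz with h1 | h1
    · exact ha h1
    · apply hne
      have : (n₂ : ℚ) = n₁ := by linarith [sub_eq_zero.mp h1]
      exact_mod_cast this.symm
  · -- 2y = 2kπ - 2x, so x + y = kπ, rational, hence 0
    have hxy : ((a * (n₁ + n₂) + 2 * b : ℚ) : ℝ) = (k : ℝ) * π := by
      push_cast
      linarith
    have := rat_eq_int_mul_pi hxy
    push_cast at this
    linarith
end

section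
/- Let a₁ ∈ ℝ with a₁ ≠ 0, T > 0, and ω₁, φ₁ ∈ ℝ with sin(ω₁T) ≠ 0; set θ_n = ω₁Tn + φ₁, z₁(n) = sin θ_{n+1} − sin θ_n, z₂(n) = a₁T((n+1)cos θ_{n+1} − n cos θ_n), z₃(n) = a₁(cos θ_{n+1} − cos θ_n), let R_N be the 3×3 real matrix with entries [R_N]_{i,j} = Σ_{n=1}^{N−1} z_i(n)·z_j(n), and set γ = (1 − cos(ω₁T))⁻¹. Then, for all sufficiently large N the matrix R_N is invertible, and the diagonal entries of its inverse satisfy: lim_{N→∞} N·[R_N⁻¹]_{1,1} = γ, lim_{N→∞} N³·[R_N⁻¹]_{2,2} = 12γ/(a₁²T²), and lim_{N→∞} N·[R_N⁻¹]_{3,3} = 4γ/a₁². -/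
open Filter

/-- The three sensitivity sequences `z₁, z₂, z₃` (partial derivatives of the
first-order difference of the sampled sinusoid w.r.t. amplitude, frequency, phase). -/
noncomputable def zSeq (a₁ T ω₁ φ₁ : ℝ) : Fin 3 → ℕ → ℝ :=
  ![fun n => Real.sin (ω₁ * T * (n + 1) + φ₁) - Real.sin (ω₁ * T * n + φ₁),
    fun n => a₁ * T * ((n + 1) * Real.cos (ω₁ * T * (n + 1) + φ₁)
      - n * Real.cos (ω₁ * T * n + φ₁)),
    fun n => a₁ * (Real.cos (ω₁ * T * (n + 1) + φ₁) - Real.cos (ω₁ * T * n + φ₁))]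

/-- The Gram (Fisher-information-type) matrix `R_N` with entries
`[R_N]_{i,j} = Σ_{n=1}^{N−1} z_i(n) z_j(n)`. -/
noncomputable def Rmat (a₁ T ω₁ φ₁ : ℝ) (N : ℕ) : Matrix (Fin 3) (Fin 3) ℝ :=
  Matrix.of fun i j => ∑ n ∈ Finset.Icc 1 (N - 1),
    zSeq a₁ T ω₁ φ₁ i n * zSeq a₁ T ω₁ φ₁ j n


open Finset


lemma sum_range_cast (N : ℕ) : ∑ n ∈ range N, (n : ℝ) = N * (N - 1) / 2 := by
  induction N with
  | zero => simp
  | succ n ih => rw [Finset.sum_range_succ, ih]; push_cast; ring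

lemma sum_range_sq (N : ℕ) : ∑ n ∈ range N, (n : ℝ) ^ 2 = N * (N - 1) * (2 * N - 1) / 6 := by
  induction N with
  | zero => simp
  | succ n ih => rw [Finset.sum_range_succ, ih]; push_cast; ring

lemma range_eq_insert (N : ℕ) (h : 1 ≤ N) : range N = insert 0 (Icc 1 (N - 1)) := by
  ext x
  simp only [Finset.mem_range, Finset.mem_insert, Finset.mem_Icc]
  omega

lemma sum_Icc_eq (f : ℕ → ℝ) {N : ℕ} (h : 1 ≤ N) :
    ∑ n ∈ Icc 1 (N - 1), f n = (∑ n ∈ range N, f n) - f 0 := by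
  rw [range_eq_insert N h, Finset.sum_insert (by simp)]
  ring

lemma tendsto_inv_nat : Tendsto (fun N : ℕ => ((N : ℝ))⁻¹) atTop (nhds 0) :=
  tendsto_inv_atTop_zero.comp tendsto_natCast_atTop_atTop

lemma tendsto_shift (f : ℕ → ℝ) (p : ℕ) (L : ℝ)
    (h : Tendsto (fun N : ℕ => f N / (N : ℝ) ^ p) atTop (nhds L)) :
    Tendsto (fun N : ℕ => f N / (N : ℝ) ^ (p + 1)) atTop (nhds 0) := by
  have H := h.mul tendsto_inv_nat
  rw [mul_zero] at H
  refine H.congr fun N => ?_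
  rw [pow_succ, ← div_div, div_eq_mul_inv (f N / _)]

lemma tendsto_P0 : Tendsto (fun N : ℕ =>
    (∑ n ∈ Icc 1 (N - 1), (n : ℝ) ^ (0 : ℕ)) / (N : ℝ) ^ (0 + 1)) atTop (nhds 1) := by
  have H : Tendsto (fun N : ℕ => 1 - ((N : ℝ))⁻¹) atTop (nhds 1) := by
    simpa using tendsto_const_nhds.sub tendsto_inv_nat
  refine H.congr' ?_
  filter_upwards [eventually_ge_atTop 1] with N hN
  have hN0 : (N : ℝ) ≠ 0 := Nat.cast_ne_zero.mpr (by omega)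
  rw [sum_Icc_eq _ hN]
  simp only [pow_zero, Finset.sum_const, Finset.card_range, nsmul_eq_mul, mul_one, zero_add,
    pow_one]
  field_simp

lemma tendsto_P1 : Tendsto (fun N : ℕ =>
    (∑ n ∈ Icc 1 (N - 1), (n : ℝ) ^ (1 : ℕ)) / (N : ℝ) ^ (1 + 1)) atTop (nhds (1 / 2)) := by
  have H : Tendsto (fun N : ℕ => (1 - ((N : ℝ))⁻¹) / 2) atTop (nhds (1 / 2)) := by
    have := (tendsto_const_nhds (α := ℕ) (f := atTop) (x := (1 : ℝ))|>.sub tendsto_inv_nat).div_const 2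
    simpa using this
  refine H.congr' ?_
  filter_upwards [eventually_ge_atTop 1] with N hN
  have hN0 : (N : ℝ) ≠ 0 := Nat.cast_ne_zero.mpr (by omega)
  rw [sum_Icc_eq _ hN]
  simp only [pow_one, sum_range_cast, Nat.cast_zero, sub_zero]
  field_simp
  ring

lemma tendsto_P2 : Tendsto (fun N : ℕ =>
    (∑ n ∈ Icc 1 (N - 1), (n : ℝ) ^ (2 : ℕ)) / (N : ℝ) ^ (2 + 1)) atTop (nhds (1 / 3)) := by
  have H : Tendsto (fun N : ℕ => (1 - ((N : ℝ))⁻¹) * (2 - ((N : ℝ))⁻¹) / 6) atTop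
      (nhds (1 / 3)) := by
    have := ((tendsto_const_nhds (α := ℕ) (f := atTop) (x := (1 : ℝ))|>.sub tendsto_inv_nat).mul
      ((tendsto_const_nhds (α := ℕ) (f := atTop) (x := (2 : ℝ))|>.sub tendsto_inv_nat))).div_const 6
    norm_num at this
    exact this
  refine H.congr' ?_
  filter_upwards [eventually_ge_atTop 1] with N hN
  have hN0 : (N : ℝ) ≠ 0 := Nat.cast_ne_zero.mpr (by omega)
  rw [sum_Icc_eq _ hN]
  simp only [sum_range_sq, Nat.cast_zero, ne_eq, OfNat.ofNat_ne_zero, not_false_eq_true,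
    zero_pow, sub_zero]
  field_simp
  ring


lemma osc_bound (α : ℝ) (hα : Real.cos α ≠ 1) (β : ℝ) (k : ℕ) :
    ∃ C : ℝ, 0 ≤ C ∧ ∀ N : ℕ,
      |∑ n ∈ Finset.range N, (n : ℝ) ^ k * Real.cos (α * n + β)| ≤ C * ((N : ℝ) ^ k + 1) := by
  set z : ℂ := Complex.exp (α * Complex.I) with hzdef
  have hz1 : z ≠ 1 := by
    intro h
    apply hα
    have := congrArg Complex.re h
    simpa [hzdef, Complex.exp_ofReal_mul_I_re] using this
  have hzabs : ‖z‖ = 1 := Complex.norm_exp_ofReal_mul_I α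
  have hpos : 0 < ‖z - 1‖ := norm_pos_iff.mpr (sub_ne_zero.mpr hz1)
  set C₀ : ℝ := 2 / ‖z - 1‖ with hC0
  have hC0pos : 0 ≤ C₀ := div_nonneg (by norm_num) hpos.le
  set g : ℕ → ℂ := fun n => Complex.exp (β * Complex.I) * z ^ n with hg
  have hG : ∀ m : ℕ, ‖∑ j ∈ Finset.range m, g j‖ ≤ C₀ := by
    intro m
    rw [hg, ← Finset.mul_sum, geom_sum_eq hz1]
    rw [norm_mul, Complex.norm_exp_ofReal_mul_I, one_mul, norm_div]
    rw [hC0, div_le_div_iff₀ hpos hpos]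
    have h2 : ‖z ^ m - 1‖ ≤ 2 := by
      calc ‖z ^ m - 1‖ ≤ ‖z ^ m‖ + ‖(1 : ℂ)‖ := norm_sub_le _ _
        _ = 2 := by rw [norm_pow, hzabs, one_pow, norm_one]; norm_num
    nlinarith
  set f : ℕ → ℝ := fun n => (n : ℝ) ^ k with hf
  have hfmono : ∀ i : ℕ, f i ≤ f (i + 1) := by
    intro i
    apply pow_le_pow_left₀ (by positivity)
    push_cast; linarith
  refine ⟨2 * C₀, by positivity, fun N => ?_⟩
  have hre : (∑ n ∈ Finset.range N, (n : ℝ) ^ k * Real.cos (α * n + β))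
      = (∑ n ∈ Finset.range N, f n • g n).re := by
    rw [Complex.re_sum]
    refine Finset.sum_congr rfl fun n _ => ?_
    have harg : g n = Complex.exp (((α * (n : ℝ) + β : ℝ) : ℂ) * Complex.I) := by
      show Complex.exp ((β : ℂ) * Complex.I) * z ^ n = _
      rw [hzdef, ← Complex.exp_nat_mul, ← Complex.exp_add]
      congr 1
      push_cast
      ring
    rw [harg, Complex.real_smul, Complex.re_ofReal_mul, Complex.exp_ofReal_mul_I_re]
  rw [hre]
  have hWnorm : ‖∑ n ∈ Finset.range N, f n • g n‖ ≤ 2 * C₀ * ((N : ℝ) ^ k + 1) := by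
    rcases Nat.eq_zero_or_pos N with hN | hN
    · simp [hN]
      positivity
    rw [Finset.sum_range_by_parts f g N]
    have hfN : f (N - 1) ≤ (N : ℝ) ^ k := by
      rw [hf]
      apply pow_le_pow_left₀ (by positivity)
      exact_mod_cast Nat.sub_le N 1
    have hfnonneg : 0 ≤ f (N - 1) := by positivity
    calc ‖f (N - 1) • (∑ i ∈ Finset.range N, g i)
            - ∑ i ∈ Finset.range (N - 1), (f (i + 1) - f i) • (∑ j ∈ Finset.range (i + 1), g j)‖
        ≤ ‖f (N - 1) • (∑ i ∈ Finset.range N, g i)‖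
          + ‖∑ i ∈ Finset.range (N - 1), (f (i + 1) - f i) • (∑ j ∈ Finset.range (i + 1), g j)‖ :=
          norm_sub_le _ _
      _ ≤ f (N - 1) * C₀ + ∑ i ∈ Finset.range (N - 1), (f (i + 1) - f i) * C₀ := by
          gcongr
          · rw [norm_smul, Real.norm_eq_abs, abs_of_nonneg hfnonneg]
            exact mul_le_mul_of_nonneg_left (hG N) hfnonneg
          · calc ‖∑ i ∈ Finset.range (N - 1), (f (i + 1) - f i) • (∑ j ∈ Finset.range (i + 1), g j)‖
                ≤ ∑ i ∈ Finset.range (N - 1), ‖(f (i + 1) - f i) • (∑ j ∈ Finset.range (i + 1), g j)‖ :=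
                  norm_sum_le _ _
              _ ≤ ∑ i ∈ Finset.range (N - 1), (f (i + 1) - f i) * C₀ := by
                  refine Finset.sum_le_sum fun i _ => ?_
                  rw [norm_smul, Real.norm_eq_abs, abs_of_nonneg (by linarith [hfmono i])]
                  exact mul_le_mul_of_nonneg_left (hG (i + 1)) (by linarith [hfmono i])
      _ ≤ 2 * C₀ * ((N : ℝ) ^ k + 1) := by
          rw [← Finset.sum_mul, Finset.sum_range_sub f]
          have h0 : 0 ≤ f 0 := by positivity
          nlinarith
  calc |(∑ n ∈ Finset.range N, f n • g n).re| ≤ ‖∑ n ∈ Finset.range N, f n • g n‖ :=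
        Complex.abs_re_le_norm _
    _ ≤ 2 * C₀ * ((N : ℝ) ^ k + 1) := hWnorm

lemma osc_tendsto (α : ℝ) (hα : Real.cos α ≠ 1) (β : ℝ) (k : ℕ) :
    Tendsto (fun N : ℕ =>
        (∑ n ∈ Finset.Icc 1 (N - 1), (n : ℝ) ^ k * Real.cos (α * n + β)) / (N : ℝ) ^ (k + 1))
      atTop (nhds 0) := by
  obtain ⟨C, hC0, hC⟩ := osc_bound α hα β k
  apply squeeze_zero_norm' (a := fun N : ℕ => (2 * C + 2) * (N : ℝ)⁻¹)
  · filter_upwards [eventually_ge_atTop 1] with N hN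
    have hN1 : (1 : ℝ) ≤ (N : ℝ) := by exact_mod_cast hN
    have hN0 : (N : ℝ) ≠ 0 := by linarith
    have hNk : (1 : ℝ) ≤ (N : ℝ) ^ k := by calc (1:ℝ) = 1 ^ k := (one_pow k).symm
      _ ≤ (N : ℝ) ^ k := pow_le_pow_left₀ zero_le_one hN1 k
    have hkey : |∑ n ∈ Finset.Icc 1 (N - 1), (n : ℝ) ^ k * Real.cos (α * n + β)|
        ≤ (2 * C + 2) * (N : ℝ) ^ k := by
      rw [sum_Icc_eq _ hN]
      have h0 : |(0 : ℕ) ^ k * Real.cos (α * (0 : ℕ) + β)| ≤ 1 := by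
        rw [abs_mul]
        have h1 : |((0 : ℕ) : ℝ) ^ k| ≤ 1 := by
          rcases Nat.eq_zero_or_pos k with hk | hk <;> simp [hk]
          rw [zero_pow (by omega)]
          norm_num
        have h2 : |Real.cos (α * (0 : ℕ) + β)| ≤ 1 := Real.abs_cos_le_one _
        nlinarith [abs_nonneg (((0 : ℕ) : ℝ) ^ k)]
      calc |(∑ n ∈ Finset.range N, (n : ℝ) ^ k * Real.cos (α * n + β))
              - (0 : ℕ) ^ k * Real.cos (α * (0 : ℕ) + β)|
          ≤ |∑ n ∈ Finset.range N, (n : ℝ) ^ k * Real.cos (α * n + β)|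
            + |(0 : ℕ) ^ k * Real.cos (α * (0 : ℕ) + β)| := abs_sub _ _
        _ ≤ C * ((N : ℝ) ^ k + 1) + 1 := by
            have := hC N
            linarith [h0]
        _ ≤ (2 * C + 2) * (N : ℝ) ^ k := by nlinarith
    rw [Real.norm_eq_abs, abs_div, abs_of_nonneg (by positivity : (0:ℝ) ≤ (N : ℝ) ^ (k + 1))]
    calc |∑ n ∈ Finset.Icc 1 (N - 1), (n : ℝ) ^ k * Real.cos (α * n + β)| / (N : ℝ) ^ (k + 1)
        ≤ ((2 * C + 2) * (N : ℝ) ^ k) / (N : ℝ) ^ (k + 1) := by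
          gcongr
      _ = (2 * C + 2) * (N : ℝ)⁻¹ := by
          rw [pow_succ]
          rw [mul_comm ((N : ℝ) ^ k) (N : ℝ)]
          rw [mul_div_mul_right _ _ (by positivity : (N : ℝ) ^ k ≠ 0)]
          rw [div_eq_mul_inv]
  · have := tendsto_inv_nat.const_mul (2 * C + 2)
    simpa using this

lemma tendsto_BS (δ φ : ℝ) (hδ : Real.cos (2 * δ) ≠ 1) (k : ℕ) (L : ℝ)
    (hP : Tendsto (fun N : ℕ =>
      (∑ n ∈ Finset.Icc 1 (N - 1), (n : ℝ) ^ k) / (N : ℝ) ^ (k + 1)) atTop (nhds L)) :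
    Tendsto (fun N : ℕ =>
        (∑ n ∈ Finset.Icc 1 (N - 1), (n : ℝ) ^ k * Real.sin (δ * n + φ) ^ 2) / (N : ℝ) ^ (k + 1))
      atTop (nhds (L / 2)) := by
  have hrw : ∀ N : ℕ, ∑ n ∈ Finset.Icc 1 (N - 1), (n : ℝ) ^ k * Real.sin (δ * n + φ) ^ 2
      = (∑ n ∈ Finset.Icc 1 (N - 1), (n : ℝ) ^ k) / 2
        - (∑ n ∈ Finset.Icc 1 (N - 1), (n : ℝ) ^ k * Real.cos ((2 * δ) * n + 2 * φ)) / 2 := by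
    intro N
    rw [Finset.sum_div, Finset.sum_div, ← Finset.sum_sub_distrib]
    refine Finset.sum_congr rfl fun n _ => ?_
    rw [Real.sin_sq_eq_half_sub, show 2 * (δ * (n : ℝ) + φ) = (2 * δ) * n + 2 * φ by ring]
    ring
  have H := (hP.div_const 2).sub ((osc_tendsto (2 * δ) hδ (2 * φ) k).div_const 2)
  have h0 : L / 2 - 0 / 2 = L / 2 := by norm_num
  rw [← h0]
  refine H.congr fun N => ?_
  rw [hrw N]
  ring

lemma tendsto_BC (δ φ : ℝ) (hδ : Real.cos (2 * δ) ≠ 1) (k : ℕ) (L : ℝ)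
    (hP : Tendsto (fun N : ℕ =>
      (∑ n ∈ Finset.Icc 1 (N - 1), (n : ℝ) ^ k) / (N : ℝ) ^ (k + 1)) atTop (nhds L)) :
    Tendsto (fun N : ℕ =>
        (∑ n ∈ Finset.Icc 1 (N - 1), (n : ℝ) ^ k * Real.cos (δ * n + φ) ^ 2) / (N : ℝ) ^ (k + 1))
      atTop (nhds (L / 2)) := by
  have hrw : ∀ N : ℕ, ∑ n ∈ Finset.Icc 1 (N - 1), (n : ℝ) ^ k * Real.cos (δ * n + φ) ^ 2
      = (∑ n ∈ Finset.Icc 1 (N - 1), (n : ℝ) ^ k) / 2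
        + (∑ n ∈ Finset.Icc 1 (N - 1), (n : ℝ) ^ k * Real.cos ((2 * δ) * n + 2 * φ)) / 2 := by
    intro N
    rw [Finset.sum_div, Finset.sum_div, ← Finset.sum_add_distrib]
    refine Finset.sum_congr rfl fun n _ => ?_
    rw [Real.cos_sq, show 2 * (δ * (n : ℝ) + φ) = (2 * δ) * n + 2 * φ by ring]
    ring
  have H := (hP.div_const 2).add ((osc_tendsto (2 * δ) hδ (2 * φ) k).div_const 2)
  have h0 : L / 2 + 0 / 2 = L / 2 := by norm_num
  rw [← h0]
  refine H.congr fun N => ?_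
  rw [hrw N]
  ring

lemma tendsto_BM (δ φ : ℝ) (hδ : Real.cos (2 * δ) ≠ 1) (k : ℕ) :
    Tendsto (fun N : ℕ =>
        (∑ n ∈ Finset.Icc 1 (N - 1),
          (n : ℝ) ^ k * (Real.sin (δ * n + φ) * Real.cos (δ * n + φ))) / (N : ℝ) ^ (k + 1))
      atTop (nhds 0) := by
  have hrw : ∀ N : ℕ,
      ∑ n ∈ Finset.Icc 1 (N - 1), (n : ℝ) ^ k * (Real.sin (δ * n + φ) * Real.cos (δ * n + φ))
      = (∑ n ∈ Finset.Icc 1 (N - 1), (n : ℝ) ^ k * Real.cos ((2 * δ) * n + (2 * φ - Real.pi / 2))) / 2 := by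
    intro N
    rw [Finset.sum_div]
    refine Finset.sum_congr rfl fun n _ => ?_
    rw [show (2 * δ) * (n : ℝ) + (2 * φ - Real.pi / 2) = 2 * (δ * n + φ) - Real.pi / 2 by ring,
      Real.cos_sub_pi_div_two, Real.sin_two_mul]
    ring
  have H := (osc_tendsto (2 * δ) hδ (2 * φ - Real.pi / 2) k).div_const 2
  have h0 : (0 : ℝ) / 2 = 0 := by norm_num
  rw [← h0]
  refine H.congr fun N => ?_
  rw [hrw N]
  ring

lemma entry00 (a₁ T ω₁ φ₁ : ℝ) (hδ : Real.cos (2 * (ω₁ * T)) ≠ 1) :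
    Tendsto (fun N : ℕ => Rmat a₁ T ω₁ φ₁ N 0 0 / (N : ℝ) ^ (0 + 1)) atTop
      (nhds (1 - Real.cos (ω₁ * T))) := by
  have hz : ∀ n : ℕ, zSeq a₁ T ω₁ φ₁ 0 n * zSeq a₁ T ω₁ φ₁ 0 n =
      ((Real.cos (ω₁ * T) - 1) ^ 2) * ((n : ℝ) ^ (0 : ℕ) * Real.sin (ω₁ * T * n + φ₁) ^ 2)
      + (Real.sin (ω₁ * T) ^ 2) * ((n : ℝ) ^ (0 : ℕ) * Real.cos (ω₁ * T * n + φ₁) ^ 2)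
      + (2 * Real.sin (ω₁ * T) * (Real.cos (ω₁ * T) - 1)) *
        ((n : ℝ) ^ (0 : ℕ) * (Real.sin (ω₁ * T * n + φ₁) * Real.cos (ω₁ * T * n + φ₁))) := by
    intro n
    simp only [zSeq, Matrix.cons_val_zero]
    rw [show ω₁ * T * ((n : ℝ) + 1) + φ₁ = (ω₁ * T * n + φ₁) + ω₁ * T by ring, Real.sin_add]
    ring
  have hsum : ∀ N : ℕ, Rmat a₁ T ω₁ φ₁ N 0 0 =
      ((Real.cos (ω₁ * T) - 1) ^ 2) *
        (∑ n ∈ Finset.Icc 1 (N - 1), (n : ℝ) ^ (0 : ℕ) * Real.sin (ω₁ * T * n + φ₁) ^ 2)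
      + (Real.sin (ω₁ * T) ^ 2) *
        (∑ n ∈ Finset.Icc 1 (N - 1), (n : ℝ) ^ (0 : ℕ) * Real.cos (ω₁ * T * n + φ₁) ^ 2)
      + (2 * Real.sin (ω₁ * T) * (Real.cos (ω₁ * T) - 1)) *
        (∑ n ∈ Finset.Icc 1 (N - 1), (n : ℝ) ^ (0 : ℕ) *
          (Real.sin (ω₁ * T * n + φ₁) * Real.cos (ω₁ * T * n + φ₁))) := by
    intro N
    simp only [Rmat, Matrix.of_apply]
    rw [Finset.sum_congr rfl fun n _ => hz n]
    simp only [Finset.sum_add_distrib, ← Finset.mul_sum]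
  have H := (((tendsto_BS (ω₁ * T) φ₁ hδ 0 1 tendsto_P0).const_mul
      ((Real.cos (ω₁ * T) - 1) ^ 2)).add
    ((tendsto_BC (ω₁ * T) φ₁ hδ 0 1 tendsto_P0).const_mul (Real.sin (ω₁ * T) ^ 2))).add
    ((tendsto_BM (ω₁ * T) φ₁ hδ 0).const_mul (2 * Real.sin (ω₁ * T) * (Real.cos (ω₁ * T) - 1)))
  have H2 := H.congr (f₂ := fun N : ℕ => Rmat a₁ T ω₁ φ₁ N 0 0 / (N : ℝ) ^ (0 + 1))
    (fun N => by beta_reduce; rw [hsum N]; ring)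
  convert H2 using 2
  linear_combination (-1 / 2 : ℝ) * Real.sin_sq_add_cos_sq (ω₁ * T)

lemma entry01 (a₁ T ω₁ φ₁ : ℝ) (hδ : Real.cos (2 * (ω₁ * T)) ≠ 1) :
    Tendsto (fun N : ℕ => Rmat a₁ T ω₁ φ₁ N 0 1 / (N : ℝ) ^ (1 + 1)) atTop
      (nhds (0 : ℝ)) := by
  have hz : ∀ n : ℕ, zSeq a₁ T ω₁ φ₁ 0 n * zSeq a₁ T ω₁ φ₁ 1 n =
      (a₁ * T * (-(Real.sin (ω₁ * T)) * (Real.cos (ω₁ * T) - 1))) * ((n : ℝ) ^ (1 : ℕ) * Real.sin (ω₁ * T * n + φ₁) ^ 2)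
      + (a₁ * T * (Real.sin (ω₁ * T) * (Real.cos (ω₁ * T) - 1))) * ((n : ℝ) ^ (1 : ℕ) * Real.cos (ω₁ * T * n + φ₁) ^ 2)
      + (a₁ * T * ((Real.cos (ω₁ * T) - 1) ^ 2 - Real.sin (ω₁ * T) ^ 2)) * ((n : ℝ) ^ (1 : ℕ) * (Real.sin (ω₁ * T * n + φ₁) * Real.cos (ω₁ * T * n + φ₁)))
      + (a₁ * T * (-(Real.sin (ω₁ * T)) * (Real.cos (ω₁ * T) - 1))) * ((n : ℝ) ^ (0 : ℕ) * Real.sin (ω₁ * T * n + φ₁) ^ 2)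
      + (a₁ * T * (Real.sin (ω₁ * T) * Real.cos (ω₁ * T))) * ((n : ℝ) ^ (0 : ℕ) * Real.cos (ω₁ * T * n + φ₁) ^ 2)
      + (a₁ * T * (Real.cos (ω₁ * T) * (Real.cos (ω₁ * T) - 1) - Real.sin (ω₁ * T) ^ 2)) * ((n : ℝ) ^ (0 : ℕ) * (Real.sin (ω₁ * T * n + φ₁) * Real.cos (ω₁ * T * n + φ₁))) := by
    intro n
    simp only [zSeq, Matrix.cons_val_zero, Matrix.cons_val_one, Matrix.head_cons,
      Matrix.cons_val_two, Matrix.tail_cons]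
    rw [show ω₁ * T * ((n : ℝ) + 1) + φ₁ = (ω₁ * T * n + φ₁) + ω₁ * T by ring, Real.sin_add (ω₁ * T * n + φ₁) (ω₁ * T), Real.cos_add (ω₁ * T * n + φ₁) (ω₁ * T)]
    ring
  have hsum : ∀ N : ℕ, Rmat a₁ T ω₁ φ₁ N 0 1 =
      (a₁ * T * (-(Real.sin (ω₁ * T)) * (Real.cos (ω₁ * T) - 1))) *
        (∑ n ∈ Finset.Icc 1 (N - 1), (n : ℝ) ^ (1 : ℕ) * Real.sin (ω₁ * T * n + φ₁) ^ 2)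
      + (a₁ * T * (Real.sin (ω₁ * T) * (Real.cos (ω₁ * T) - 1))) *
        (∑ n ∈ Finset.Icc 1 (N - 1), (n : ℝ) ^ (1 : ℕ) * Real.cos (ω₁ * T * n + φ₁) ^ 2)
      + (a₁ * T * ((Real.cos (ω₁ * T) - 1) ^ 2 - Real.sin (ω₁ * T) ^ 2)) *
        (∑ n ∈ Finset.Icc 1 (N - 1), (n : ℝ) ^ (1 : ℕ) * (Real.sin (ω₁ * T * n + φ₁) * Real.cos (ω₁ * T * n + φ₁)))
      + (a₁ * T * (-(Real.sin (ω₁ * T)) * (Real.cos (ω₁ * T) - 1))) *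
        (∑ n ∈ Finset.Icc 1 (N - 1), (n : ℝ) ^ (0 : ℕ) * Real.sin (ω₁ * T * n + φ₁) ^ 2)
      + (a₁ * T * (Real.sin (ω₁ * T) * Real.cos (ω₁ * T))) *
        (∑ n ∈ Finset.Icc 1 (N - 1), (n : ℝ) ^ (0 : ℕ) * Real.cos (ω₁ * T * n + φ₁) ^ 2)
      + (a₁ * T * (Real.cos (ω₁ * T) * (Real.cos (ω₁ * T) - 1) - Real.sin (ω₁ * T) ^ 2)) *
        (∑ n ∈ Finset.Icc 1 (N - 1), (n : ℝ) ^ (0 : ℕ) * (Real.sin (ω₁ * T * n + φ₁) * Real.cos (ω₁ * T * n + φ₁))) := by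
    intro N
    simp only [Rmat, Matrix.of_apply]
    rw [Finset.sum_congr rfl fun n _ => hz n]
    simp only [Finset.sum_add_distrib, ← Finset.mul_sum]
  have H := (((((((tendsto_BS (ω₁ * T) φ₁ hδ 1 (1/2) tendsto_P1).const_mul (a₁ * T * (-(Real.sin (ω₁ * T)) * (Real.cos (ω₁ * T) - 1)))).add
    ((tendsto_BC (ω₁ * T) φ₁ hδ 1 (1/2) tendsto_P1).const_mul (a₁ * T * (Real.sin (ω₁ * T) * (Real.cos (ω₁ * T) - 1))))).add
    ((tendsto_BM (ω₁ * T) φ₁ hδ 1).const_mul (a₁ * T * ((Real.cos (ω₁ * T) - 1) ^ 2 - Real.sin (ω₁ * T) ^ 2)))).add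
    ((tendsto_shift _ _ _ (tendsto_BS (ω₁ * T) φ₁ hδ 0 1 tendsto_P0)).const_mul (a₁ * T * (-(Real.sin (ω₁ * T)) * (Real.cos (ω₁ * T) - 1))))).add
    ((tendsto_shift _ _ _ (tendsto_BC (ω₁ * T) φ₁ hδ 0 1 tendsto_P0)).const_mul (a₁ * T * (Real.sin (ω₁ * T) * Real.cos (ω₁ * T))))).add
    ((tendsto_shift _ _ _ (tendsto_BM (ω₁ * T) φ₁ hδ 0)).const_mul (a₁ * T * (Real.cos (ω₁ * T) * (Real.cos (ω₁ * T) - 1) - Real.sin (ω₁ * T) ^ 2))))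
  have H2 := H.congr (f₂ := fun N : ℕ => Rmat a₁ T ω₁ φ₁ N 0 1 / (N : ℝ) ^ (1 + 1))
    (fun N => by beta_reduce; rw [hsum N]; ring)
  convert H2 using 2
  ring

lemma entry02 (a₁ T ω₁ φ₁ : ℝ) (hδ : Real.cos (2 * (ω₁ * T)) ≠ 1) :
    Tendsto (fun N : ℕ => Rmat a₁ T ω₁ φ₁ N 0 2 / (N : ℝ) ^ (0 + 1)) atTop
      (nhds (0 : ℝ)) := by
  have hz : ∀ n : ℕ, zSeq a₁ T ω₁ φ₁ 0 n * zSeq a₁ T ω₁ φ₁ 2 n =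
      (a₁ * (-(Real.sin (ω₁ * T)) * (Real.cos (ω₁ * T) - 1))) * ((n : ℝ) ^ (0 : ℕ) * Real.sin (ω₁ * T * n + φ₁) ^ 2)
      + (a₁ * (Real.sin (ω₁ * T) * (Real.cos (ω₁ * T) - 1))) * ((n : ℝ) ^ (0 : ℕ) * Real.cos (ω₁ * T * n + φ₁) ^ 2)
      + (a₁ * ((Real.cos (ω₁ * T) - 1) ^ 2 - Real.sin (ω₁ * T) ^ 2)) * ((n : ℝ) ^ (0 : ℕ) * (Real.sin (ω₁ * T * n + φ₁) * Real.cos (ω₁ * T * n + φ₁))) := by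
    intro n
    simp only [zSeq, Matrix.cons_val_zero, Matrix.cons_val_one, Matrix.head_cons,
      Matrix.cons_val_two, Matrix.tail_cons]
    rw [show ω₁ * T * ((n : ℝ) + 1) + φ₁ = (ω₁ * T * n + φ₁) + ω₁ * T by ring, Real.sin_add (ω₁ * T * n + φ₁) (ω₁ * T), Real.cos_add (ω₁ * T * n + φ₁) (ω₁ * T)]
    ring
  have hsum : ∀ N : ℕ, Rmat a₁ T ω₁ φ₁ N 0 2 =
      (a₁ * (-(Real.sin (ω₁ * T)) * (Real.cos (ω₁ * T) - 1))) *
        (∑ n ∈ Finset.Icc 1 (N - 1), (n : ℝ) ^ (0 : ℕ) * Real.sin (ω₁ * T * n + φ₁) ^ 2)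
      + (a₁ * (Real.sin (ω₁ * T) * (Real.cos (ω₁ * T) - 1))) *
        (∑ n ∈ Finset.Icc 1 (N - 1), (n : ℝ) ^ (0 : ℕ) * Real.cos (ω₁ * T * n + φ₁) ^ 2)
      + (a₁ * ((Real.cos (ω₁ * T) - 1) ^ 2 - Real.sin (ω₁ * T) ^ 2)) *
        (∑ n ∈ Finset.Icc 1 (N - 1), (n : ℝ) ^ (0 : ℕ) * (Real.sin (ω₁ * T * n + φ₁) * Real.cos (ω₁ * T * n + φ₁))) := by
    intro N
    simp only [Rmat, Matrix.of_apply]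
    rw [Finset.sum_congr rfl fun n _ => hz n]
    simp only [Finset.sum_add_distrib, ← Finset.mul_sum]
  have H := ((((tendsto_BS (ω₁ * T) φ₁ hδ 0 1 tendsto_P0).const_mul (a₁ * (-(Real.sin (ω₁ * T)) * (Real.cos (ω₁ * T) - 1)))).add
    ((tendsto_BC (ω₁ * T) φ₁ hδ 0 1 tendsto_P0).const_mul (a₁ * (Real.sin (ω₁ * T) * (Real.cos (ω₁ * T) - 1))))).add
    ((tendsto_BM (ω₁ * T) φ₁ hδ 0).const_mul (a₁ * ((Real.cos (ω₁ * T) - 1) ^ 2 - Real.sin (ω₁ * T) ^ 2))))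
  have H2 := H.congr (f₂ := fun N : ℕ => Rmat a₁ T ω₁ φ₁ N 0 2 / (N : ℝ) ^ (0 + 1))
    (fun N => by beta_reduce; rw [hsum N]; ring)
  convert H2 using 2
  ring

lemma entry11 (a₁ T ω₁ φ₁ : ℝ) (hδ : Real.cos (2 * (ω₁ * T)) ≠ 1) :
    Tendsto (fun N : ℕ => Rmat a₁ T ω₁ φ₁ N 1 1 / (N : ℝ) ^ (2 + 1)) atTop
      (nhds (a₁ ^ 2 * T ^ 2 * (1 - Real.cos (ω₁ * T)) / 3)) := by
  have hz : ∀ n : ℕ, zSeq a₁ T ω₁ φ₁ 1 n * zSeq a₁ T ω₁ φ₁ 1 n =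
      (a₁ ^ 2 * T ^ 2 * Real.sin (ω₁ * T) ^ 2) * ((n : ℝ) ^ (2 : ℕ) * Real.sin (ω₁ * T * n + φ₁) ^ 2)
      + (a₁ ^ 2 * T ^ 2 * (Real.cos (ω₁ * T) - 1) ^ 2) * ((n : ℝ) ^ (2 : ℕ) * Real.cos (ω₁ * T * n + φ₁) ^ 2)
      + (-(2 * a₁ ^ 2 * T ^ 2 * Real.sin (ω₁ * T) * (Real.cos (ω₁ * T) - 1))) * ((n : ℝ) ^ (2 : ℕ) * (Real.sin (ω₁ * T * n + φ₁) * Real.cos (ω₁ * T * n + φ₁)))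
      + (2 * a₁ ^ 2 * T ^ 2 * Real.sin (ω₁ * T) ^ 2) * ((n : ℝ) ^ (1 : ℕ) * Real.sin (ω₁ * T * n + φ₁) ^ 2)
      + (2 * a₁ ^ 2 * T ^ 2 * Real.cos (ω₁ * T) * (Real.cos (ω₁ * T) - 1)) * ((n : ℝ) ^ (1 : ℕ) * Real.cos (ω₁ * T * n + φ₁) ^ 2)
      + (-(2 * a₁ ^ 2 * T ^ 2 * Real.sin (ω₁ * T) * (2 * Real.cos (ω₁ * T) - 1))) * ((n : ℝ) ^ (1 : ℕ) * (Real.sin (ω₁ * T * n + φ₁) * Real.cos (ω₁ * T * n + φ₁)))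
      + (a₁ ^ 2 * T ^ 2 * Real.sin (ω₁ * T) ^ 2) * ((n : ℝ) ^ (0 : ℕ) * Real.sin (ω₁ * T * n + φ₁) ^ 2)
      + (a₁ ^ 2 * T ^ 2 * Real.cos (ω₁ * T) ^ 2) * ((n : ℝ) ^ (0 : ℕ) * Real.cos (ω₁ * T * n + φ₁) ^ 2)
      + (-(2 * a₁ ^ 2 * T ^ 2 * Real.sin (ω₁ * T) * Real.cos (ω₁ * T))) * ((n : ℝ) ^ (0 : ℕ) * (Real.sin (ω₁ * T * n + φ₁) * Real.cos (ω₁ * T * n + φ₁))) := by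
    intro n
    simp only [zSeq, Matrix.cons_val_zero, Matrix.cons_val_one, Matrix.head_cons,
      Matrix.cons_val_two, Matrix.tail_cons]
    rw [show ω₁ * T * ((n : ℝ) + 1) + φ₁ = (ω₁ * T * n + φ₁) + ω₁ * T by ring, Real.cos_add (ω₁ * T * n + φ₁) (ω₁ * T)]
    ring
  have hsum : ∀ N : ℕ, Rmat a₁ T ω₁ φ₁ N 1 1 =
      (a₁ ^ 2 * T ^ 2 * Real.sin (ω₁ * T) ^ 2) *
        (∑ n ∈ Finset.Icc 1 (N - 1), (n : ℝ) ^ (2 : ℕ) * Real.sin (ω₁ * T * n + φ₁) ^ 2)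
      + (a₁ ^ 2 * T ^ 2 * (Real.cos (ω₁ * T) - 1) ^ 2) *
        (∑ n ∈ Finset.Icc 1 (N - 1), (n : ℝ) ^ (2 : ℕ) * Real.cos (ω₁ * T * n + φ₁) ^ 2)
      + (-(2 * a₁ ^ 2 * T ^ 2 * Real.sin (ω₁ * T) * (Real.cos (ω₁ * T) - 1))) *
        (∑ n ∈ Finset.Icc 1 (N - 1), (n : ℝ) ^ (2 : ℕ) * (Real.sin (ω₁ * T * n + φ₁) * Real.cos (ω₁ * T * n + φ₁)))
      + (2 * a₁ ^ 2 * T ^ 2 * Real.sin (ω₁ * T) ^ 2) *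
        (∑ n ∈ Finset.Icc 1 (N - 1), (n : ℝ) ^ (1 : ℕ) * Real.sin (ω₁ * T * n + φ₁) ^ 2)
      + (2 * a₁ ^ 2 * T ^ 2 * Real.cos (ω₁ * T) * (Real.cos (ω₁ * T) - 1)) *
        (∑ n ∈ Finset.Icc 1 (N - 1), (n : ℝ) ^ (1 : ℕ) * Real.cos (ω₁ * T * n + φ₁) ^ 2)
      + (-(2 * a₁ ^ 2 * T ^ 2 * Real.sin (ω₁ * T) * (2 * Real.cos (ω₁ * T) - 1))) *
        (∑ n ∈ Finset.Icc 1 (N - 1), (n : ℝ) ^ (1 : ℕ) * (Real.sin (ω₁ * T * n + φ₁) * Real.cos (ω₁ * T * n + φ₁)))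
      + (a₁ ^ 2 * T ^ 2 * Real.sin (ω₁ * T) ^ 2) *
        (∑ n ∈ Finset.Icc 1 (N - 1), (n : ℝ) ^ (0 : ℕ) * Real.sin (ω₁ * T * n + φ₁) ^ 2)
      + (a₁ ^ 2 * T ^ 2 * Real.cos (ω₁ * T) ^ 2) *
        (∑ n ∈ Finset.Icc 1 (N - 1), (n : ℝ) ^ (0 : ℕ) * Real.cos (ω₁ * T * n + φ₁) ^ 2)
      + (-(2 * a₁ ^ 2 * T ^ 2 * Real.sin (ω₁ * T) * Real.cos (ω₁ * T))) *
        (∑ n ∈ Finset.Icc 1 (N - 1), (n : ℝ) ^ (0 : ℕ) * (Real.sin (ω₁ * T * n + φ₁) * Real.cos (ω₁ * T * n + φ₁))) := by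
    intro N
    simp only [Rmat, Matrix.of_apply]
    rw [Finset.sum_congr rfl fun n _ => hz n]
    simp only [Finset.sum_add_distrib, ← Finset.mul_sum]
  have H := ((((((((((tendsto_BS (ω₁ * T) φ₁ hδ 2 (1/3) tendsto_P2).const_mul (a₁ ^ 2 * T ^ 2 * Real.sin (ω₁ * T) ^ 2)).add
    ((tendsto_BC (ω₁ * T) φ₁ hδ 2 (1/3) tendsto_P2).const_mul (a₁ ^ 2 * T ^ 2 * (Real.cos (ω₁ * T) - 1) ^ 2))).add
    ((tendsto_BM (ω₁ * T) φ₁ hδ 2).const_mul (-(2 * a₁ ^ 2 * T ^ 2 * Real.sin (ω₁ * T) * (Real.cos (ω₁ * T) - 1))))).add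
    ((tendsto_shift _ _ _ (tendsto_BS (ω₁ * T) φ₁ hδ 1 (1/2) tendsto_P1)).const_mul (2 * a₁ ^ 2 * T ^ 2 * Real.sin (ω₁ * T) ^ 2))).add
    ((tendsto_shift _ _ _ (tendsto_BC (ω₁ * T) φ₁ hδ 1 (1/2) tendsto_P1)).const_mul (2 * a₁ ^ 2 * T ^ 2 * Real.cos (ω₁ * T) * (Real.cos (ω₁ * T) - 1)))).add
    ((tendsto_shift _ _ _ (tendsto_BM (ω₁ * T) φ₁ hδ 1)).const_mul (-(2 * a₁ ^ 2 * T ^ 2 * Real.sin (ω₁ * T) * (2 * Real.cos (ω₁ * T) - 1))))).add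
    ((tendsto_shift _ _ _ (tendsto_shift _ _ _ (tendsto_BS (ω₁ * T) φ₁ hδ 0 1 tendsto_P0))).const_mul (a₁ ^ 2 * T ^ 2 * Real.sin (ω₁ * T) ^ 2))).add
    ((tendsto_shift _ _ _ (tendsto_shift _ _ _ (tendsto_BC (ω₁ * T) φ₁ hδ 0 1 tendsto_P0))).const_mul (a₁ ^ 2 * T ^ 2 * Real.cos (ω₁ * T) ^ 2))).add
    ((tendsto_shift _ _ _ (tendsto_shift _ _ _ (tendsto_BM (ω₁ * T) φ₁ hδ 0))).const_mul (-(2 * a₁ ^ 2 * T ^ 2 * Real.sin (ω₁ * T) * Real.cos (ω₁ * T)))))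
  have H2 := H.congr (f₂ := fun N : ℕ => Rmat a₁ T ω₁ φ₁ N 1 1 / (N : ℝ) ^ (2 + 1))
    (fun N => by beta_reduce; rw [hsum N]; ring)
  convert H2 using 2
  linear_combination (-(a₁ ^ 2 * T ^ 2) / 6 : ℝ) * Real.sin_sq_add_cos_sq (ω₁ * T)

lemma entry12 (a₁ T ω₁ φ₁ : ℝ) (hδ : Real.cos (2 * (ω₁ * T)) ≠ 1) :
    Tendsto (fun N : ℕ => Rmat a₁ T ω₁ φ₁ N 1 2 / (N : ℝ) ^ (1 + 1)) atTop
      (nhds (a₁ ^ 2 * T * (1 - Real.cos (ω₁ * T)) / 2)) := by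
  have hz : ∀ n : ℕ, zSeq a₁ T ω₁ φ₁ 1 n * zSeq a₁ T ω₁ φ₁ 2 n =
      (a₁ ^ 2 * T * Real.sin (ω₁ * T) ^ 2) * ((n : ℝ) ^ (1 : ℕ) * Real.sin (ω₁ * T * n + φ₁) ^ 2)
      + (a₁ ^ 2 * T * (Real.cos (ω₁ * T) - 1) ^ 2) * ((n : ℝ) ^ (1 : ℕ) * Real.cos (ω₁ * T * n + φ₁) ^ 2)
      + (-(2 * a₁ ^ 2 * T * Real.sin (ω₁ * T) * (Real.cos (ω₁ * T) - 1))) * ((n : ℝ) ^ (1 : ℕ) * (Real.sin (ω₁ * T * n + φ₁) * Real.cos (ω₁ * T * n + φ₁)))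
      + (a₁ ^ 2 * T * Real.sin (ω₁ * T) ^ 2) * ((n : ℝ) ^ (0 : ℕ) * Real.sin (ω₁ * T * n + φ₁) ^ 2)
      + (a₁ ^ 2 * T * Real.cos (ω₁ * T) * (Real.cos (ω₁ * T) - 1)) * ((n : ℝ) ^ (0 : ℕ) * Real.cos (ω₁ * T * n + φ₁) ^ 2)
      + (-(a₁ ^ 2 * T * Real.sin (ω₁ * T) * (2 * Real.cos (ω₁ * T) - 1))) * ((n : ℝ) ^ (0 : ℕ) * (Real.sin (ω₁ * T * n + φ₁) * Real.cos (ω₁ * T * n + φ₁))) := by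
    intro n
    simp only [zSeq, Matrix.cons_val_zero, Matrix.cons_val_one, Matrix.head_cons,
      Matrix.cons_val_two, Matrix.tail_cons]
    rw [show ω₁ * T * ((n : ℝ) + 1) + φ₁ = (ω₁ * T * n + φ₁) + ω₁ * T by ring, Real.cos_add (ω₁ * T * n + φ₁) (ω₁ * T)]
    ring
  have hsum : ∀ N : ℕ, Rmat a₁ T ω₁ φ₁ N 1 2 =
      (a₁ ^ 2 * T * Real.sin (ω₁ * T) ^ 2) *
        (∑ n ∈ Finset.Icc 1 (N - 1), (n : ℝ) ^ (1 : ℕ) * Real.sin (ω₁ * T * n + φ₁) ^ 2)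
      + (a₁ ^ 2 * T * (Real.cos (ω₁ * T) - 1) ^ 2) *
        (∑ n ∈ Finset.Icc 1 (N - 1), (n : ℝ) ^ (1 : ℕ) * Real.cos (ω₁ * T * n + φ₁) ^ 2)
      + (-(2 * a₁ ^ 2 * T * Real.sin (ω₁ * T) * (Real.cos (ω₁ * T) - 1))) *
        (∑ n ∈ Finset.Icc 1 (N - 1), (n : ℝ) ^ (1 : ℕ) * (Real.sin (ω₁ * T * n + φ₁) * Real.cos (ω₁ * T * n + φ₁)))
      + (a₁ ^ 2 * T * Real.sin (ω₁ * T) ^ 2) *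
        (∑ n ∈ Finset.Icc 1 (N - 1), (n : ℝ) ^ (0 : ℕ) * Real.sin (ω₁ * T * n + φ₁) ^ 2)
      + (a₁ ^ 2 * T * Real.cos (ω₁ * T) * (Real.cos (ω₁ * T) - 1)) *
        (∑ n ∈ Finset.Icc 1 (N - 1), (n : ℝ) ^ (0 : ℕ) * Real.cos (ω₁ * T * n + φ₁) ^ 2)
      + (-(a₁ ^ 2 * T * Real.sin (ω₁ * T) * (2 * Real.cos (ω₁ * T) - 1))) *
        (∑ n ∈ Finset.Icc 1 (N - 1), (n : ℝ) ^ (0 : ℕ) * (Real.sin (ω₁ * T * n + φ₁) * Real.cos (ω₁ * T * n + φ₁))) := by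
    intro N
    simp only [Rmat, Matrix.of_apply]
    rw [Finset.sum_congr rfl fun n _ => hz n]
    simp only [Finset.sum_add_distrib, ← Finset.mul_sum]
  have H := (((((((tendsto_BS (ω₁ * T) φ₁ hδ 1 (1/2) tendsto_P1).const_mul (a₁ ^ 2 * T * Real.sin (ω₁ * T) ^ 2)).add
    ((tendsto_BC (ω₁ * T) φ₁ hδ 1 (1/2) tendsto_P1).const_mul (a₁ ^ 2 * T * (Real.cos (ω₁ * T) - 1) ^ 2))).add
    ((tendsto_BM (ω₁ * T) φ₁ hδ 1).const_mul (-(2 * a₁ ^ 2 * T * Real.sin (ω₁ * T) * (Real.cos (ω₁ * T) - 1))))).add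
    ((tendsto_shift _ _ _ (tendsto_BS (ω₁ * T) φ₁ hδ 0 1 tendsto_P0)).const_mul (a₁ ^ 2 * T * Real.sin (ω₁ * T) ^ 2))).add
    ((tendsto_shift _ _ _ (tendsto_BC (ω₁ * T) φ₁ hδ 0 1 tendsto_P0)).const_mul (a₁ ^ 2 * T * Real.cos (ω₁ * T) * (Real.cos (ω₁ * T) - 1)))).add
    ((tendsto_shift _ _ _ (tendsto_BM (ω₁ * T) φ₁ hδ 0)).const_mul (-(a₁ ^ 2 * T * Real.sin (ω₁ * T) * (2 * Real.cos (ω₁ * T) - 1)))))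
  have H2 := H.congr (f₂ := fun N : ℕ => Rmat a₁ T ω₁ φ₁ N 1 2 / (N : ℝ) ^ (1 + 1))
    (fun N => by beta_reduce; rw [hsum N]; ring)
  convert H2 using 2
  linear_combination (-(a₁ ^ 2 * T) / 4 : ℝ) * Real.sin_sq_add_cos_sq (ω₁ * T)

lemma entry22 (a₁ T ω₁ φ₁ : ℝ) (hδ : Real.cos (2 * (ω₁ * T)) ≠ 1) :
    Tendsto (fun N : ℕ => Rmat a₁ T ω₁ φ₁ N 2 2 / (N : ℝ) ^ (0 + 1)) atTop
      (nhds (a₁ ^ 2 * (1 - Real.cos (ω₁ * T)))) := by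
  have hz : ∀ n : ℕ, zSeq a₁ T ω₁ φ₁ 2 n * zSeq a₁ T ω₁ φ₁ 2 n =
      (a₁ ^ 2 * Real.sin (ω₁ * T) ^ 2) * ((n : ℝ) ^ (0 : ℕ) * Real.sin (ω₁ * T * n + φ₁) ^ 2)
      + (a₁ ^ 2 * (Real.cos (ω₁ * T) - 1) ^ 2) * ((n : ℝ) ^ (0 : ℕ) * Real.cos (ω₁ * T * n + φ₁) ^ 2)
      + (-(2 * a₁ ^ 2 * Real.sin (ω₁ * T) * (Real.cos (ω₁ * T) - 1))) * ((n : ℝ) ^ (0 : ℕ) * (Real.sin (ω₁ * T * n + φ₁) * Real.cos (ω₁ * T * n + φ₁))) := by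
    intro n
    simp only [zSeq, Matrix.cons_val_zero, Matrix.cons_val_one, Matrix.head_cons,
      Matrix.cons_val_two, Matrix.tail_cons]
    rw [show ω₁ * T * ((n : ℝ) + 1) + φ₁ = (ω₁ * T * n + φ₁) + ω₁ * T by ring, Real.cos_add (ω₁ * T * n + φ₁) (ω₁ * T)]
    ring
  have hsum : ∀ N : ℕ, Rmat a₁ T ω₁ φ₁ N 2 2 =
      (a₁ ^ 2 * Real.sin (ω₁ * T) ^ 2) *
        (∑ n ∈ Finset.Icc 1 (N - 1), (n : ℝ) ^ (0 : ℕ) * Real.sin (ω₁ * T * n + φ₁) ^ 2)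
      + (a₁ ^ 2 * (Real.cos (ω₁ * T) - 1) ^ 2) *
        (∑ n ∈ Finset.Icc 1 (N - 1), (n : ℝ) ^ (0 : ℕ) * Real.cos (ω₁ * T * n + φ₁) ^ 2)
      + (-(2 * a₁ ^ 2 * Real.sin (ω₁ * T) * (Real.cos (ω₁ * T) - 1))) *
        (∑ n ∈ Finset.Icc 1 (N - 1), (n : ℝ) ^ (0 : ℕ) * (Real.sin (ω₁ * T * n + φ₁) * Real.cos (ω₁ * T * n + φ₁))) := by
    intro N
    simp only [Rmat, Matrix.of_apply]
    rw [Finset.sum_congr rfl fun n _ => hz n]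
    simp only [Finset.sum_add_distrib, ← Finset.mul_sum]
  have H := ((((tendsto_BS (ω₁ * T) φ₁ hδ 0 1 tendsto_P0).const_mul (a₁ ^ 2 * Real.sin (ω₁ * T) ^ 2)).add
    ((tendsto_BC (ω₁ * T) φ₁ hδ 0 1 tendsto_P0).const_mul (a₁ ^ 2 * (Real.cos (ω₁ * T) - 1) ^ 2))).add
    ((tendsto_BM (ω₁ * T) φ₁ hδ 0).const_mul (-(2 * a₁ ^ 2 * Real.sin (ω₁ * T) * (Real.cos (ω₁ * T) - 1)))))
  have H2 := H.congr (f₂ := fun N : ℕ => Rmat a₁ T ω₁ φ₁ N 2 2 / (N : ℝ) ^ (0 + 1))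
    (fun N => by beta_reduce; rw [hsum N]; ring)
  convert H2 using 2
  linear_combination (-(a₁ ^ 2) / 2 : ℝ) * Real.sin_sq_add_cos_sq (ω₁ * T)

lemma Rmat_symm (a₁ T ω₁ φ₁ : ℝ) (N : ℕ) (i j : Fin 3) :
    Rmat a₁ T ω₁ φ₁ N i j = Rmat a₁ T ω₁ φ₁ N j i := by
  simp only [Rmat, Matrix.of_apply]
  exact Finset.sum_congr rfl fun n _ => mul_comm _ _


/-- Theorem 2 (equation (4)) of the paper: asymptotics of the diagonal entries of the
inverse Gram matrix, i.e. of the Cramér–Rao bounds up to the factor `2σ²`. -/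
theorem inverse_Rmat_diagonal_asymptotics
    (a₁ T ω₁ φ₁ : ℝ) (ha : a₁ ≠ 0) (hT : 0 < T) (hs : Real.sin (ω₁ * T) ≠ 0)
    (γ : ℝ) (hγ : γ = (1 - Real.cos (ω₁ * T))⁻¹) :
    (∀ᶠ N : ℕ in atTop, IsUnit (Rmat a₁ T ω₁ φ₁ N).det) ∧
    Tendsto (fun N : ℕ => (N : ℝ) * ((Rmat a₁ T ω₁ φ₁ N)⁻¹ 0 0))
      atTop (nhds γ) ∧
    Tendsto (fun N : ℕ => (N : ℝ) ^ 3 * ((Rmat a₁ T ω₁ φ₁ N)⁻¹ 1 1))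
      atTop (nhds (12 * γ / (a₁ ^ 2 * T ^ 2))) ∧
    Tendsto (fun N : ℕ => (N : ℝ) * ((Rmat a₁ T ω₁ φ₁ N)⁻¹ 2 2))
      atTop (nhds (4 * γ / a₁ ^ 2)) := by
  have hT0 : T ≠ 0 := ne_of_gt hT
  have hcos1 : Real.cos (ω₁ * T) ≠ 1 := by
    intro h
    apply hs
    have h1 := Real.sin_sq_add_cos_sq (ω₁ * T)
    have : Real.sin (ω₁ * T) ^ 2 = 0 := by rw [h] at h1; nlinarith
    exact pow_eq_zero_iff (by norm_num) |>.mp this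
  have hδ : Real.cos (2 * (ω₁ * T)) ≠ 1 := by
    intro h
    apply hs
    have h1 := Real.sin_sq_add_cos_sq (ω₁ * T)
    have h2 := Real.cos_two_mul' (ω₁ * T)
    have : Real.sin (ω₁ * T) ^ 2 = 0 := by rw [h] at h2; linarith
    exact pow_eq_zero_iff (by norm_num) |>.mp this
  have hc : 1 - Real.cos (ω₁ * T) ≠ 0 := sub_ne_zero.mpr (fun h => hcos1 h.symm)
  have E00 := entry00 a₁ T ω₁ φ₁ hδ
  have E01 := entry01 a₁ T ω₁ φ₁ hδ
  have E02 := entry02 a₁ T ω₁ φ₁ hδ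
  have E11 := entry11 a₁ T ω₁ φ₁ hδ
  have E12 := entry12 a₁ T ω₁ φ₁ hδ
  have E22 := entry22 a₁ T ω₁ φ₁ hδ
  have hLdetne : a₁ ^ 4 * T ^ 2 * (1 - Real.cos (ω₁ * T)) ^ 3 / 12 ≠ 0 := by
    apply div_ne_zero _ (by norm_num)
    exact mul_ne_zero (mul_ne_zero (pow_ne_zero 4 ha) (pow_ne_zero 2 hT0)) (pow_ne_zero 3 hc)
  have Hdet : Tendsto (fun N : ℕ => (Rmat a₁ T ω₁ φ₁ N).det / (N : ℝ) ^ 5) atTop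
      (nhds (a₁ ^ 4 * T ^ 2 * (1 - Real.cos (ω₁ * T)) ^ 3 / 12)) := by
    have H := ((((((E00.mul E11).mul E22).sub ((E00.mul E12).mul E12)).sub
      ((E01.mul E01).mul E22)).add ((E01.mul E12).mul E02)).add
      ((E02.mul E01).mul E12)).sub ((E02.mul E11).mul E02)
    have H2 := H.congr (f₂ := fun N : ℕ => (Rmat a₁ T ω₁ φ₁ N).det / (N : ℝ) ^ 5)
      (fun N => by
        beta_reduce
        rw [Matrix.det_fin_three, Rmat_symm a₁ T ω₁ φ₁ N 1 0, Rmat_symm a₁ T ω₁ φ₁ N 2 0,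
          Rmat_symm a₁ T ω₁ φ₁ N 2 1]
        ring)
    convert H2 using 2
    ring
  have hdetev : ∀ᶠ N : ℕ in atTop, (Rmat a₁ T ω₁ φ₁ N).det ≠ 0 := by
    filter_upwards [Hdet.eventually_ne hLdetne] with N h
    intro h0
    apply h
    rw [h0, zero_div]
  refine ⟨?_, ?_, ?_, ?_⟩
  · filter_upwards [hdetev] with N h
    exact isUnit_iff_ne_zero.mpr h
  · -- (R⁻¹)₀₀
    have hinv : ∀ N : ℕ, (Rmat a₁ T ω₁ φ₁ N)⁻¹ 0 0
        = (Rmat a₁ T ω₁ φ₁ N 1 1 * Rmat a₁ T ω₁ φ₁ N 2 2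
           - Rmat a₁ T ω₁ φ₁ N 1 2 * Rmat a₁ T ω₁ φ₁ N 2 1) / (Rmat a₁ T ω₁ φ₁ N).det := by
      intro N
      rw [Matrix.inv_def, Matrix.smul_apply, Matrix.adjugate_fin_three, Ring.inverse_eq_inv,
        smul_eq_mul, inv_mul_eq_div]
      congr 1
    have Hnum := (E11.mul E22).sub (E12.mul E12)
    have Hfrac := Hnum.div Hdet hLdetne
    have H2 := Hfrac.congr' (f₂ := fun N : ℕ => (N : ℝ) * ((Rmat a₁ T ω₁ φ₁ N)⁻¹ 0 0)) ?_
    · convert H2 using 2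
      rw [hγ]
      field_simp
      ring
    · filter_upwards [eventually_ge_atTop 1] with N hN
      rw [Pi.div_apply]
      have hN0 : (N : ℝ) ≠ 0 := Nat.cast_ne_zero.mpr (by omega)
      rw [hinv N, Rmat_symm a₁ T ω₁ φ₁ N 2 1]
      rcases eq_or_ne (Rmat a₁ T ω₁ φ₁ N).det 0 with hd | hd
      · rw [hd]
        simp only [zero_div, div_zero, mul_zero]
      · field_simp
        ring
  · -- (R⁻¹)₁₁
    have hinv : ∀ N : ℕ, (Rmat a₁ T ω₁ φ₁ N)⁻¹ 1 1
        = (Rmat a₁ T ω₁ φ₁ N 0 0 * Rmat a₁ T ω₁ φ₁ N 2 2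
           - Rmat a₁ T ω₁ φ₁ N 0 2 * Rmat a₁ T ω₁ φ₁ N 2 0) / (Rmat a₁ T ω₁ φ₁ N).det := by
      intro N
      rw [Matrix.inv_def, Matrix.smul_apply, Matrix.adjugate_fin_three, Ring.inverse_eq_inv,
        smul_eq_mul, inv_mul_eq_div]
      congr 1
    have Hnum := (E00.mul E22).sub (E02.mul E02)
    have Hfrac := Hnum.div Hdet hLdetne
    have H2 := Hfrac.congr' (f₂ := fun N : ℕ => (N : ℝ) ^ 3 * ((Rmat a₁ T ω₁ φ₁ N)⁻¹ 1 1)) ?_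
    · convert H2 using 2
      rw [hγ]
      field_simp
      ring
    · filter_upwards [eventually_ge_atTop 1] with N hN
      rw [Pi.div_apply]
      have hN0 : (N : ℝ) ≠ 0 := Nat.cast_ne_zero.mpr (by omega)
      rw [hinv N, Rmat_symm a₁ T ω₁ φ₁ N 2 0]
      rcases eq_or_ne (Rmat a₁ T ω₁ φ₁ N).det 0 with hd | hd
      · rw [hd]
        simp only [zero_div, div_zero, mul_zero]
      · field_simp
        ring
  · -- (R⁻¹)₂₂
    have hinv : ∀ N : ℕ, (Rmat a₁ T ω₁ φ₁ N)⁻¹ 2 2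
        = (Rmat a₁ T ω₁ φ₁ N 0 0 * Rmat a₁ T ω₁ φ₁ N 1 1
           - Rmat a₁ T ω₁ φ₁ N 0 1 * Rmat a₁ T ω₁ φ₁ N 1 0) / (Rmat a₁ T ω₁ φ₁ N).det := by
      intro N
      rw [Matrix.inv_def, Matrix.smul_apply, Matrix.adjugate_fin_three, Ring.inverse_eq_inv,
        smul_eq_mul, inv_mul_eq_div]
      congr 1
    have Hnum := (E00.mul E11).sub (E01.mul E01)
    have Hfrac := Hnum.div Hdet hLdetne
    have H2 := Hfrac.congr' (f₂ := fun N : ℕ => (N : ℝ) * ((Rmat a₁ T ω₁ φ₁ N)⁻¹ 2 2)) ?_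
    · convert H2 using 2
      rw [hγ]
      field_simp
      ring
    · filter_upwards [eventually_ge_atTop 1] with N hN
      rw [Pi.div_apply]
      have hN0 : (N : ℝ) ≠ 0 := Nat.cast_ne_zero.mpr (by omega)
      rw [hinv N, Rmat_symm a₁ T ω₁ φ₁ N 1 0]
      rcases eq_or_ne (Rmat a₁ T ω₁ φ₁ N).det 0 with hd | hd
      · rw [hd]
        simp only [zero_div, div_zero, mul_zero]
      · field_simp
        ring
end
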